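/- arXiv:1708.08682 — 7 statements merged into one kernel-verified Lean document; each statement's English description precedes it below -/
import Mathlib

section
/- Suppose additionally that φ'(x) ≠ 0 for all x ∈ I. Then the identity E₁ = −q²·φ²·φ'³·( ((qφ')'·φ)/(q·φ'²) )' holds everywhere on I. -/
open Real Set MeasureTheory

/-- `A = (qφ')'φ − qφ'²` from Definition 1. -/
noncomputable def Afun (q φ : ℝ → ℝ) : ℝ → ℝ :=
  fun x => deriv (fun y => q y * deriv φ y) x * φ x - q x * (deriv φ x) ^ 2

/-- `B₀ = (qφ')'φ²` from Definition 1. -/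
noncomputable def B0fun (q φ : ℝ → ℝ) : ℝ → ℝ :=
  fun x => deriv (fun y => q y * deriv φ y) x * (φ x) ^ 2

/-- `B = (qφ'M)'φ²` from Definition 1. -/
noncomputable def Bfun (q φ M : ℝ → ℝ) : ℝ → ℝ :=
  fun x => deriv (fun y => q y * deriv φ y * M y) x * (φ x) ^ 2

/-- `C = qφ²φ'²M²` from Definition 1. -/
noncomputable def Cfun (q φ M : ℝ → ℝ) : ℝ → ℝ :=
  fun x => q x * (φ x) ^ 2 * (deriv φ x) ^ 2 * (M x) ^ 2

/-- `E₂ = A q φ φ'² − B₀' q φ φ' + (qφ')' φ q (φ²φ')'` from Definition 1. -/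
noncomputable def E2fun (q φ : ℝ → ℝ) : ℝ → ℝ :=
  fun x => Afun q φ x * q x * φ x * (deriv φ x) ^ 2
    - deriv (B0fun q φ) x * q x * φ x * deriv φ x
    + deriv (fun y => q y * deriv φ y) x * φ x * q x *
        deriv (fun y => (φ y) ^ 2 * deriv φ y) x

/-- `E₁ = A²φ + E₂` from Definition 1. -/
noncomputable def E1fun (q φ : ℝ → ℝ) : ℝ → ℝ :=
  fun x => (Afun q φ x) ^ 2 * φ x + E2fun q φ x

/-- `F₁ = (B − √(B²−4AC))/(2A)` from Definition 1. -/
noncomputable def F1fun (q φ M : ℝ → ℝ) : ℝ → ℝ :=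
  fun x => (Bfun q φ M x -
    Real.sqrt ((Bfun q φ M x) ^ 2 - 4 * Afun q φ x * Cfun q φ M x)) / (2 * Afun q φ x)

/-- `F₂ = (B + √(B²−4AC))/(2A)` from Definition 1. -/
noncomputable def F2fun (q φ M : ℝ → ℝ) : ℝ → ℝ :=
  fun x => (Bfun q φ M x +
    Real.sqrt ((Bfun q φ M x) ^ 2 - 4 * Afun q φ x * Cfun q φ M x)) / (2 * Afun q φ x)

open Filter Topology

theorem hasDerivAt_deriv_mul {𝕜 : Type*} [NontriviallyNormedField 𝕜] {f g : 𝕜 → 𝕜} {x : 𝕜}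
    (hf : ∀ᶠ y in 𝓝 x, DifferentiableAt 𝕜 f y) (hg : ∀ᶠ y in 𝓝 x, DifferentiableAt 𝕜 g y)
    (hf' : DifferentiableAt 𝕜 (deriv f) x) (hg' : DifferentiableAt 𝕜 (deriv g) x) :
    HasDerivAt (deriv fun y => f y * g y)
      (deriv (deriv f) x * g x + 2 * deriv f x * deriv g x + f x * deriv (deriv g) x) x := by
  have hderiv : deriv (fun y => f y * g y) =ᶠ[𝓝 x] fun y => deriv f y * g y + f y * deriv g y := by
    filter_upwards [hf, hg] with y hfy hgy using deriv_mul hfy hgy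
  refine (((hf'.hasDerivAt.fun_mul hg.self_of_nhds.hasDerivAt).add
    (hf.self_of_nhds.hasDerivAt.fun_mul hg'.hasDerivAt)).congr_of_eventuallyEq hderiv).congr_deriv ?_
  ring

theorem E1fun_eq_neg_mul_deriv_div {q φ : ℝ → ℝ} {x : ℝ}
    (hq : ∀ᶠ y in 𝓝 x, DifferentiableAt ℝ q y) (hq' : DifferentiableAt ℝ (deriv q) x)
    (hφ : DifferentiableAt ℝ φ x) (hφ' : ∀ᶠ y in 𝓝 x, DifferentiableAt ℝ (deriv φ) y)
    (hφ'' : DifferentiableAt ℝ (deriv (deriv φ)) x) (hqx : q x ≠ 0) (hφx : deriv φ x ≠ 0) :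
    E1fun q φ x =
      -(q x) ^ 2 * (φ x) ^ 2 * (deriv φ x) ^ 3 *
        deriv (fun y =>
          deriv (fun z => q z * deriv φ z) y * φ y / (q y * (deriv φ y) ^ 2)) x := by
  have hqφ' := hq.self_of_nhds.hasDerivAt.fun_mul hφ'.self_of_nhds.hasDerivAt
  have hqφ'' := hasDerivAt_deriv_mul hq hφ' hq' hφ''
  have hB0 : HasDerivAt (B0fun q φ) _ x := hqφ''.fun_mul (hφ.hasDerivAt.fun_pow 2)
  have hφ2φ' := (hφ.hasDerivAt.fun_pow 2).fun_mul hφ'.self_of_nhds.hasDerivAt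
  have hquot := (hqφ''.fun_mul hφ.hasDerivAt).fun_div
    (hq.self_of_nhds.hasDerivAt.fun_mul (hφ'.self_of_nhds.hasDerivAt.fun_pow 2))
    (mul_ne_zero hqx (pow_ne_zero 2 hφx))
  simp only [E1fun, E2fun, Afun]
  rw [hquot.deriv, hB0.deriv, hφ2φ'.deriv, hqφ'.deriv]
  field_simp
  ring

theorem stmt1_general (I : Set ℝ) (hI : IsOpen I)
    (q φ : ℝ → ℝ)
    (hqpos : ∀ x ∈ I, 0 < q x)
    (hq1 : ∀ x ∈ I, DifferentiableAt ℝ q x)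
    (hq2 : ∀ x ∈ I, DifferentiableAt ℝ (deriv q) x)
    (hφ1 : ∀ x ∈ I, DifferentiableAt ℝ φ x)
    (hφ2 : ∀ x ∈ I, DifferentiableAt ℝ (deriv φ) x)
    (hφ3 : ∀ x ∈ I, DifferentiableAt ℝ (deriv (deriv φ)) x)
    (hφ' : ∀ x ∈ I, deriv φ x ≠ 0) :
    ∀ x ∈ I, E1fun q φ x =
      -(q x) ^ 2 * (φ x) ^ 2 * (deriv φ x) ^ 3 *
        deriv (fun y =>
          deriv (fun z => q z * deriv φ z) y * φ y / (q y * (deriv φ y) ^ 2)) x := by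
  intro x hx
  have hnhds : ∀ᶠ y in 𝓝 x, y ∈ I := hI.mem_nhds hx
  exact E1fun_eq_neg_mul_deriv_div (hnhds.mono hq1) (hq2 x hx) (hφ1 x hx) (hnhds.mono hφ2)
    (hφ3 x hx) (hqpos x hx).ne' (hφ' x hx)

/-- Lemma 3, identity (2): if `φ' ≠ 0` on `I` then
`E₁ = −q²·φ²·φ'³·( ((qφ')'·φ)/(q·φ'²) )'` on `I`. -/
theorem stmt1 (I : Set ℝ) (hI : IsOpen I) (hne : I.Nonempty) (hconn : I.OrdConnected)
    (q φ : ℝ → ℝ)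
    (hqpos : ∀ x ∈ I, 0 < q x)
    (hq1 : ∀ x ∈ I, DifferentiableAt ℝ q x)
    (hq2 : ∀ x ∈ I, DifferentiableAt ℝ (deriv q) x)
    (hφ1 : ∀ x ∈ I, DifferentiableAt ℝ φ x)
    (hφ2 : ∀ x ∈ I, DifferentiableAt ℝ (deriv φ) x)
    (hφ3 : ∀ x ∈ I, DifferentiableAt ℝ (deriv (deriv φ)) x)
    (hφ' : ∀ x ∈ I, deriv φ x ≠ 0) :
    ∀ x ∈ I, E1fun q φ x =
      -(q x) ^ 2 * (φ x) ^ 2 * (deriv φ x) ^ 3 *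
        deriv (fun y =>
          deriv (fun z => q z * deriv φ z) y * φ y / (q y * (deriv φ y) ^ 2)) x :=
  stmt1_general I hI q φ hqpos hq1 hq2 hφ1 hφ2 hφ3 hφ'
end

section
/- The identity B'·q·φ²·φ'·M = B·(B − B₀·M) + B₀'·q·φ²·φ'·M² + (φ²φ')'·q·M·(B − B₀·M) + C·φ²·(q·M'/M)' holds everywhere on I. -/
open Real Set MeasureTheory

/-!
The product rule for `(qφ'·M)'` gives `B = B₀·M + D` with `D = qφ'M'φ² = (φ²φ')·(qM'/M)·M`.
Differentiating `B = B₀·M + D`, the `B₀'` terms on both sides of the identity cancel, and what is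
left holds because `(qM'/M)·M = qM'`.
-/

open Filter Topology

variable {q φ M : ℝ → ℝ} {x : ℝ}

theorem Bfun_eq_B0fun_mul_add (hu : DifferentiableAt ℝ (fun y => q y * deriv φ y) x)
    (hM : DifferentiableAt ℝ M x) :
    Bfun q φ M x = B0fun q φ x * M x + q x * deriv φ x * deriv M x * φ x ^ 2 := by
  simp only [Bfun, B0fun]
  rw [deriv_fun_mul hu hM]
  ring

theorem Bfun_eventuallyEq_B0fun_mul_add (hq : ∀ᶠ y in 𝓝 x, DifferentiableAt ℝ q y)
    (hφ' : ∀ᶠ y in 𝓝 x, DifferentiableAt ℝ (deriv φ) y)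
    (hM : ∀ᶠ y in 𝓝 x, DifferentiableAt ℝ M y) (hM0 : ∀ᶠ y in 𝓝 x, M y ≠ 0) :
    Bfun q φ M =ᶠ[𝓝 x] fun y =>
      B0fun q φ y * M y + φ y ^ 2 * deriv φ y * (q y * deriv M y / M y) * M y := by
  filter_upwards [hq, hφ', hM, hM0] with y hqy hφy hMy hMy0
  rw [Bfun_eq_B0fun_mul_add (hqy.mul hφy) hMy]
  field_simp

theorem differentiableAt_B0fun (hq : ∀ᶠ y in 𝓝 x, DifferentiableAt ℝ q y)
    (hφ' : ∀ᶠ y in 𝓝 x, DifferentiableAt ℝ (deriv φ) y)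
    (hq' : DifferentiableAt ℝ (deriv q) x) (hφ'' : DifferentiableAt ℝ (deriv (deriv φ)) x)
    (hφ : DifferentiableAt ℝ φ x) : DifferentiableAt ℝ (B0fun q φ) x := by
  have hB0 : B0fun q φ =ᶠ[𝓝 x]
      fun y => (deriv q y * deriv φ y + q y * deriv (deriv φ) y) * φ y ^ 2 := by
    filter_upwards [hq, hφ'] with y hqy hφy
    simp only [B0fun, deriv_fun_mul hqy hφy]
  have := hq.self_of_nhds
  have := hφ'.self_of_nhds
  exact DifferentiableAt.congr_of_eventuallyEq (by fun_prop) hB0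

theorem stmt2_general (I : Set ℝ) (hI : IsOpen I)
    (q φ : ℝ → ℝ)
    (hq1 : ∀ x ∈ I, DifferentiableAt ℝ q x)
    (hq2 : ∀ x ∈ I, DifferentiableAt ℝ (deriv q) x)
    (hφ1 : ∀ x ∈ I, DifferentiableAt ℝ φ x)
    (hφ2 : ∀ x ∈ I, DifferentiableAt ℝ (deriv φ) x)
    (hφ3 : ∀ x ∈ I, DifferentiableAt ℝ (deriv (deriv φ)) x)
    (M : ℝ → ℝ)
    (hMpos : ∀ x ∈ I, 0 < M x)
    (hM1 : ∀ x ∈ I, DifferentiableAt ℝ M x)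
    (hM2 : ∀ x ∈ I, DifferentiableAt ℝ (deriv M) x) :
    ∀ x ∈ I, deriv (Bfun q φ M) x * q x * (φ x) ^ 2 * deriv φ x * M x =
      Bfun q φ M x * (Bfun q φ M x - B0fun q φ x * M x)
        + deriv (B0fun q φ) x * q x * (φ x) ^ 2 * deriv φ x * (M x) ^ 2
        + deriv (fun y => (φ y) ^ 2 * deriv φ y) x * q x * M x *
            (Bfun q φ M x - B0fun q φ x * M x)
        + Cfun q φ M x * (φ x) ^ 2 * deriv (fun y => q y * deriv M y / M y) x := by
  intro x hx
  have near : ∀ᶠ y in 𝓝 x, y ∈ I := hI.mem_nhds hx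
  have hM0 : M x ≠ 0 := (hMpos x hx).ne'
  have hB := Bfun_eventuallyEq_B0fun_mul_add (near.mono hq1) (near.mono hφ2) (near.mono hM1)
    (near.mono fun y hy => (hMpos y hy).ne')
  have hB0 :=
    differentiableAt_B0fun (near.mono hq1) (near.mono hφ2) (hq2 x hx) (hφ3 x hx) (hφ1 x hx)
  have hφsqφ' : DifferentiableAt ℝ (fun y => φ y ^ 2 * deriv φ y) x := by
    have := hφ1 x hx; have := hφ2 x hx; fun_prop
  have hqM'M : DifferentiableAt ℝ (fun y => q y * deriv M y / M y) x :=
    ((hq1 x hx).mul (hM2 x hx)).div (hM1 x hx) hM0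
  have hB' := (hB0.hasDerivAt.fun_mul (hM1 x hx).hasDerivAt).fun_add
    ((hφsqφ'.hasDerivAt.fun_mul hqM'M.hasDerivAt).fun_mul (hM1 x hx).hasDerivAt)
  rw [hB.deriv_eq, hB'.deriv, hB.self_of_nhds]
  have hbM : q x * deriv M x / M x * M x = q x * deriv M x := div_mul_cancel₀ _ hM0
  simp only [Cfun]
  linear_combination -(B0fun q φ x * φ x ^ 2 * deriv φ x * M x
    + (φ x ^ 2 * deriv φ x) ^ 2 * (q x * deriv M x / M x) * M x) * hbM

/-- Lemma 4, identity (4):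
`B'·q·φ²·φ'·M = B·(B − B₀·M) + B₀'·q·φ²·φ'·M² + (φ²φ')'·q·M·(B − B₀·M) + C·φ²·(q·M'/M)'`. -/
theorem stmt2 (I : Set ℝ) (hI : IsOpen I) (hne : I.Nonempty) (hconn : I.OrdConnected)
    (q φ : ℝ → ℝ)
    (hqpos : ∀ x ∈ I, 0 < q x)
    (hq1 : ∀ x ∈ I, DifferentiableAt ℝ q x)
    (hq2 : ∀ x ∈ I, DifferentiableAt ℝ (deriv q) x)
    (hφ1 : ∀ x ∈ I, DifferentiableAt ℝ φ x)
    (hφ2 : ∀ x ∈ I, DifferentiableAt ℝ (deriv φ) x)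
    (hφ3 : ∀ x ∈ I, DifferentiableAt ℝ (deriv (deriv φ)) x)
    (M : ℝ → ℝ)
    (hMpos : ∀ x ∈ I, 0 < M x)
    (hM1 : ∀ x ∈ I, DifferentiableAt ℝ M x)
    (hM2 : ∀ x ∈ I, DifferentiableAt ℝ (deriv M) x) :
    ∀ x ∈ I, deriv (Bfun q φ M) x * q x * (φ x) ^ 2 * deriv φ x * M x =
      Bfun q φ M x * (Bfun q φ M x - B0fun q φ x * M x)
        + deriv (B0fun q φ) x * q x * (φ x) ^ 2 * deriv φ x * (M x) ^ 2
        + deriv (fun y => (φ y) ^ 2 * deriv φ y) x * q x * M x *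
            (Bfun q φ M x - B0fun q φ x * M x)
        + Cfun q φ M x * (φ x) ^ 2 * deriv (fun y => q y * deriv M y / M y) x :=
  stmt2_general I hI q φ hq1 hq2 hφ1 hφ2 hφ3 M hMpos hM1 hM2
end

section
/- Let J ⊆ I be a nonempty open subinterval on which A = 0 and φ' > 0 everywhere. Then ( (qφ')'/φ' )' = 0 everywhere on J and φ(x) ≠ 0 for all x ∈ J. -/
open Real Set MeasureTheory

/-!
Where `A = 0` one has `(qφ')'φ = qφ'² > 0`, so `φ ≠ 0` and `(qφ')'/φ' = qφ'/φ`. Since `A` is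
exactly the numerator of the quotient rule for `qφ'/φ`, that function has derivative
`A/φ² = 0` on the open set `J`.
-/

section

variable {q φ : ℝ → ℝ} {x : ℝ}

theorem deriv_mul_deriv_mul_ne_zero_of_Afun_eq_zero (hq : 0 < q x) (hφ' : deriv φ x ≠ 0)
    (hA : Afun q φ x = 0) : deriv (fun y => q y * deriv φ y) x * φ x ≠ 0 := by
  rw [Afun, sub_eq_zero] at hA
  rw [hA]
  exact (mul_pos hq (sq_pos_of_ne_zero hφ')).ne'

theorem deriv_mul_deriv_div_deriv_of_Afun_eq_zero (hφ : φ x ≠ 0) (hφ' : deriv φ x ≠ 0)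
    (hA : Afun q φ x = 0) :
    deriv (fun y => q y * deriv φ y) x / deriv φ x = q x * deriv φ x / φ x := by
  rw [div_eq_div_iff hφ' hφ]
  simp only [Afun, sub_eq_zero] at hA
  linear_combination hA

theorem hasDerivAt_mul_deriv_div
    (hqφ' : DifferentiableAt ℝ (fun y => q y * deriv φ y) x)
    (hφd : DifferentiableAt ℝ φ x) (hφ : φ x ≠ 0) :
    HasDerivAt (fun y => q y * deriv φ y / φ y) (Afun q φ x / φ x ^ 2) x := by
  refine (hqφ'.hasDerivAt.div hφd.hasDerivAt hφ).congr_deriv ?_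
  simp only [Afun]
  ring

end

theorem stmt7_general (I : Set ℝ)
    (q φ : ℝ → ℝ)
    (hqpos : ∀ x ∈ I, 0 < q x)
    (J : Set ℝ) (hJ : IsOpen J)
    (hJI : J ⊆ I)
    (hA0 : ∀ x ∈ J, Afun q φ x = 0)
    (hφ'pos : ∀ x ∈ J, 0 < deriv φ x) :
    ∀ x ∈ J,
      deriv (fun y => deriv (fun z => q z * deriv φ z) y / deriv φ y) x = 0 ∧
      φ x ≠ 0 := by
  have hne : ∀ y ∈ J, deriv (fun z => q z * deriv φ z) y * φ y ≠ 0 := fun y hy =>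
    deriv_mul_deriv_mul_ne_zero_of_Afun_eq_zero (hqpos y (hJI hy)) (hφ'pos y hy).ne' (hA0 y hy)
  have hφ_ne : ∀ y ∈ J, φ y ≠ 0 := fun y hy => right_ne_zero_of_mul (hne y hy)
  intro x hx
  refine ⟨?_, hφ_ne x hx⟩
  have hlocal : (fun y => deriv (fun z => q z * deriv φ z) y / deriv φ y) =ᶠ[nhds x]
      (fun y => q y * deriv φ y / φ y) := by
    filter_upwards [hJ.mem_nhds hx] with y hy
    exact deriv_mul_deriv_div_deriv_of_Afun_eq_zero (hφ_ne y hy) (hφ'pos y hy).ne' (hA0 y hy)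
  -- `deriv` is `0` off the differentiability locus, so nonzero derivatives are genuine ones.
  have hqφ'_diff : DifferentiableAt ℝ (fun y => q y * deriv φ y) x :=
    differentiableAt_of_deriv_ne_zero (left_ne_zero_of_mul (hne x hx))
  have hφ_diff : DifferentiableAt ℝ φ x := differentiableAt_of_deriv_ne_zero (hφ'pos x hx).ne'
  rw [hlocal.deriv_eq, (hasDerivAt_mul_deriv_div hqφ'_diff hφ_diff (hφ_ne x hx)).deriv,
    hA0 x hx, zero_div]

/-- Claim in the proof of Lemma 6: on a subinterval `J` where `A = 0` and `φ' > 0`,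
one has `((qφ')'/φ')' = 0` on `J` and `φ(x) ≠ 0` for all `x ∈ J`. -/
theorem stmt7 (I : Set ℝ) (hI : IsOpen I) (hne : I.Nonempty) (hconn : I.OrdConnected)
    (q φ : ℝ → ℝ)
    (hqpos : ∀ x ∈ I, 0 < q x)
    (hq1 : ∀ x ∈ I, DifferentiableAt ℝ q x)
    (hq2 : ∀ x ∈ I, DifferentiableAt ℝ (deriv q) x)
    (hφ1 : ∀ x ∈ I, DifferentiableAt ℝ φ x)
    (hφ2 : ∀ x ∈ I, DifferentiableAt ℝ (deriv φ) x)
    (hφ3 : ∀ x ∈ I, DifferentiableAt ℝ (deriv (deriv φ)) x)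
    (J : Set ℝ) (hJ : IsOpen J) (hJne : J.Nonempty) (hJconn : J.OrdConnected)
    (hJI : J ⊆ I)
    (hA0 : ∀ x ∈ J, Afun q φ x = 0)
    (hφ'pos : ∀ x ∈ J, 0 < deriv φ x) :
    ∀ x ∈ J,
      deriv (fun y => deriv (fun z => q z * deriv φ z) y / deriv φ y) x = 0 ∧
      φ x ≠ 0 :=
  stmt7_general I q φ hqpos J hJ hJI hA0 hφ'pos
end

section
/- Under the stated hypotheses, the quotient h/φ and log(h/φ) are both twice differentiable on (0,∞), and moreover (h/φ)' < 0 and (log(h/φ))'' > 0 everywhere on (0,∞). -/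
/-!
Write `g = h / φ`, `ψ = φ''φ / φ'²`, `E = -M'φ² / φ'` and `B(x) = ∫₀ˣ M'²φ² / (Mφ')`.
Integration by parts gives `h - Mφ = -∫₀ˣ M'φ > 0`, hence `g' = φ'(Mφ - h) / φ² < 0`.
Up to the positive factor `φ'² / (h²φ²)`, `(log g)''` equals
`h · ((ψ(x) - 2)(Mφ - h) - B - E) + (h B - (Mφ - h)²)`.
The second bracket is positive by the Cauchy–Schwarz inequality for
`∫ M'φ = ∫ (M'φ / √(Mφ')) √(Mφ')`, strictly, since equality would force `M = C φ^θ` with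
`θ < 0`, which is unbounded at `0`. The first bracket is nonnegative because `E(0+) = 0` and on
`(0, x)` the derivative of `E` is at most `(ψ(x) - 2) M'φ - M'²φ² / (Mφ')`: `ψ` is antitone by (v)
and `M` is log-convex. Hypothesis (i) makes `φ / φ'` increasing, which keeps every integrand
bounded near `0`.
-/

open Real Set Filter Topology MeasureTheory Asymptotics

theorem monotoneOn_Ioi_of_hasDerivAt_nonneg {f f' : ℝ → ℝ} {a : ℝ}
    (hf : ∀ x ∈ Ioi a, HasDerivAt f (f' x) x) (hf' : ∀ x ∈ Ioi a, 0 ≤ f' x) :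
    MonotoneOn f (Ioi a) :=
  monotoneOn_of_hasDerivWithinAt_nonneg (convex_Ioi a)
    (fun x hx => (hf x hx).continuousAt.continuousWithinAt)
    (by simpa only [interior_Ioi] using fun x hx => (hf x hx).hasDerivWithinAt)
    (by simpa only [interior_Ioi] using hf')

theorem antitoneOn_Ioi_of_hasDerivAt_nonpos {f f' : ℝ → ℝ} {a : ℝ}
    (hf : ∀ x ∈ Ioi a, HasDerivAt f (f' x) x) (hf' : ∀ x ∈ Ioi a, f' x ≤ 0) :
    AntitoneOn f (Ioi a) :=
  antitoneOn_of_hasDerivWithinAt_nonpos (convex_Ioi a)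
    (fun x hx => (hf x hx).continuousAt.continuousWithinAt)
    (by simpa only [interior_Ioi] using fun x hx => (hf x hx).hasDerivWithinAt)
    (by simpa only [interior_Ioi] using hf')

theorem AntitoneOn.le_of_tendsto_nhdsGT {f : ℝ → ℝ} {a l x : ℝ} (hf : AntitoneOn f (Ioi a))
    (hl : Tendsto f (𝓝[>] a) (𝓝 l)) (hx : a < x) : f x ≤ l :=
  ge_of_tendsto hl <| by
    filter_upwards [Ioo_mem_nhdsGT hx] with t ht using hf ht.1 hx ht.2.le

theorem hasDerivAt_deriv_of_eventually {f f' : ℝ → ℝ} {x f'' : ℝ}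
    (hf : ∀ᶠ y in 𝓝 x, HasDerivAt f (f' y) y) (hf' : HasDerivAt f' f'' x) :
    HasDerivAt (deriv f) f'' x :=
  hf'.congr_of_eventuallyEq (hf.mono fun _ hy => hy.deriv)

theorem continuousOn_Ici_of_continuousWithinAt {f : ℝ → ℝ} {a : ℝ}
    (ha : ContinuousWithinAt f (Ici a) a) (hf : ∀ x ∈ Ioi a, DifferentiableAt ℝ f x) :
    ContinuousOn f (Ici a) := by
  intro x hx
  rcases (mem_Ici.mp hx).eq_or_lt with rfl | hax
  · exact ha
  · exact (hf x hax).continuousAt.continuousWithinAt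

theorem intervalIntegrable_of_monotoneOn_of_nonneg {f : ℝ → ℝ} {a b : ℝ} (hab : a ≤ b)
    (hf : MonotoneOn f (Ioc a b)) (hf₀ : ∀ t ∈ Ioc a b, 0 ≤ f t) :
    IntervalIntegrable f volume a b := by
  rw [intervalIntegrable_iff_integrableOn_Ioc_of_le hab]
  refine (integrableOn_const (C := f b) measure_Ioc_lt_top.ne).mono'
    (aemeasurable_restrict_of_monotoneOn measurableSet_Ioc hf).aestronglyMeasurable ?_
  filter_upwards [ae_restrict_mem measurableSet_Ioc] with t ht
  rw [norm_of_nonneg (hf₀ t ht)]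
  exact hf ht ⟨ht.1.trans_le ht.2, le_rfl⟩ ht.2

theorem tendsto_nhdsGT_of_eq_integral {F f : ℝ → ℝ} {a b : ℝ} (hab : a < b)
    (hF : ∀ x ∈ Ioi a, F x = ∫ t in a..x, f t) (hf : IntervalIntegrable f volume a b) :
    Tendsto F (𝓝[>] a) (𝓝 0) := by
  have hprim := (intervalIntegral.continuousOn_primitive_interval
    ((intervalIntegrable_iff' (μ := volume)).mp hf)) a left_mem_uIcc
  rw [ContinuousWithinAt, intervalIntegral.integral_same, uIcc_of_le hab.le] at hprim
  refine (hprim.mono_left (nhdsWithin_le_of_mem (Icc_mem_nhdsGT hab))).congr' ?_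
  filter_upwards [self_mem_nhdsWithin] with x hx using (hF x hx).symm

theorem hasDerivAt_of_eq_integral {F f : ℝ → ℝ} {a x : ℝ} (hx : a < x)
    (hF : ∀ y ∈ Ioi a, F y = ∫ t in a..y, f t) (hf : IntervalIntegrable f volume a x)
    (hfc : ContinuousOn f (Ioi a)) : HasDerivAt F (f x) x :=
  (intervalIntegral.integral_hasDerivAt_right hf
    (hfc.stronglyMeasurableAtFilter isOpen_Ioi x hx)
    (hfc.continuousAt (Ioi_mem_nhds hx))).congr_of_eventuallyEq
    (by filter_upwards [Ioi_mem_nhds hx] with y hy using hF y hy)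

theorem intervalIntegral_pos_of_continuousOn_of_nonneg {f : ℝ → ℝ} {a b c : ℝ}
    (hfi : IntervalIntegrable f volume a b) (hf : ContinuousOn f (Ioo a b))
    (hf₀ : ∀ t ∈ Ioo a b, 0 ≤ f t) (hc : c ∈ Ioo a b) (hfc : 0 < f c) :
    0 < ∫ t in a..b, f t := by
  have hab : a < b := hc.1.trans hc.2
  have hnn : 0 ≤ᵐ[volume.restrict (uIoc a b)] f := by
    rw [EventuallyLE, uIoc_of_le hab.le]
    refine ae_restrict_of_ae_eq_of_ae_restrict Ioo_ae_eq_Ioc ?_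
    rw [ae_restrict_iff' measurableSet_Ioo]
    filter_upwards with t ht using hf₀ t ht
  rw [intervalIntegral.integral_pos_iff_support_of_nonneg_ae' hnn hfi]
  refine ⟨hab, lt_of_lt_of_le ?_ (measure_mono (s := Ioo a b ∩ f ⁻¹' Ioi 0) ?_)⟩
  · exact (hf.isOpen_inter_preimage isOpen_Ioo isOpen_Ioi).measure_pos volume ⟨c, hc, hfc⟩
  · exact fun t ht => ⟨ht.2.ne', Ioo_subset_Ioc_self ht.1⟩

theorem sub_le_integral_of_hasDerivAt_of_tendsto {E E' J : ℝ → ℝ} {a b e : ℝ} (hab : a < b)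
    (hE : ∀ t ∈ Ioc a b, HasDerivAt E (E' t) t) (hEJ : ∀ t ∈ Ioo a b, E' t ≤ J t)
    (hJ : IntervalIntegrable J volume a b) (he : Tendsto E (𝓝[>] a) (𝓝 e)) :
    E b - e ≤ ∫ t in a..b, J t := by
  have hJ' : IntegrableOn J (uIcc a b) := (intervalIntegrable_iff' (μ := volume)).mp hJ
  have hstep : ∀ ε ∈ Ioo a b, E b - E ε ≤ ∫ t in ε..b, J t := fun ε hε =>
    intervalIntegral.sub_le_integral_of_hasDeriv_right_of_le hε.2.le
      (fun t ht => (hE t ⟨hε.1.trans_le ht.1, ht.2⟩).continuousAt.continuousWithinAt)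
      (fun t ht => (hE t ⟨hε.1.trans ht.1, ht.2.le⟩).hasDerivWithinAt)
      (hJ'.mono_set (by rw [uIcc_of_le hab.le]; exact Icc_subset_Icc_left hε.1.le))
      (fun t ht => hEJ t ⟨hε.1.trans ht.1, ht.2⟩)
  have hprim := intervalIntegral.continuousOn_primitive_interval_left hJ' a left_mem_uIcc
  rw [uIcc_of_le hab.le] at hprim
  refine le_of_tendsto_of_tendsto (tendsto_const_nhds.sub he)
    (hprim.tendsto.mono_left (nhdsWithin_le_of_mem (Icc_mem_nhdsGT hab))) ?_
  filter_upwards [Ioo_mem_nhdsGT hab] with ε hε using hstep ε hε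

theorem integral_deriv_mul_eq_sub_of_tendsto {u v u' v' : ℝ → ℝ} {a b : ℝ} (hab : a < b)
    (hu : ∀ t ∈ Ioc a b, HasDerivAt u (u' t) t) (hv : ∀ t ∈ Ioc a b, HasDerivAt v (v' t) t)
    (huv : Tendsto (fun t => u t * v t) (𝓝[>] a) (𝓝 0))
    (hu'v : IntervalIntegrable (fun t => u' t * v t) volume a b)
    (huv' : IntervalIntegrable (fun t => u t * v' t) volume a b) :
    ∫ t in a..b, u' t * v t = u b * v b - ∫ t in a..b, u t * v' t := by
  have hb : b ∈ Ioc a b := ⟨hab, le_rfl⟩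
  have := intervalIntegral.integral_eq_sub_of_hasDerivAt_of_tendsto hab
    (fun t ht => (hu t (Ioo_subset_Ioc_self ht)).mul (hv t (Ioo_subset_Ioc_self ht)))
    (hu'v.add huv') huv
    (((hu b hb).continuousAt.mul (hv b hb).continuousAt).tendsto.mono_left nhdsWithin_le_nhds)
  rw [intervalIntegral.integral_add hu'v huv', Pi.mul_apply, sub_zero] at this
  linarith

theorem sq_integral_lt_integral_mul_integral {w q r : ℝ → ℝ} {a b : ℝ}
    (hw : ∀ t ∈ Ioo a b, 0 < w t) (hqr : ∀ t ∈ Ioo a b, q t ^ 2 = r t * w t)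
    (hwc : ContinuousOn w (Ioo a b)) (hqc : ContinuousOn q (Ioo a b))
    (hrc : ContinuousOn r (Ioo a b)) (hwi : IntervalIntegrable w volume a b)
    (hqi : IntervalIntegrable q volume a b) (hri : IntervalIntegrable r volume a b)
    (hne : ∀ θ : ℝ, ∃ t ∈ Ioo a b, q t ≠ θ * w t) :
    (∫ t in a..b, q t) ^ 2 < (∫ t in a..b, w t) * ∫ t in a..b, r t := by
  obtain ⟨c, hc, -⟩ := hne 0
  have hW : 0 < ∫ t in a..b, w t :=
    intervalIntegral.intervalIntegral_pos_of_pos_on hwi hw (hc.1.trans hc.2)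
  set θ := (∫ t in a..b, q t) / ∫ t in a..b, w t
  -- `r - 2θq + θ²w = (q - θw)² / w` is a nonnegative integrand, positive where `q ≠ θw`
  have hsq : ∀ t ∈ Ioo a b, (r t - 2 * θ * q t + θ ^ 2 * w t) * w t = (q t - θ * w t) ^ 2 :=
    fun t ht => by rw [sub_sq, hqr t ht]; ring
  obtain ⟨t₀, ht₀, hqt₀⟩ := hne θ
  have hpos := intervalIntegral_pos_of_continuousOn_of_nonneg
    ((hri.sub (hqi.const_mul (2 * θ))).add (hwi.const_mul (θ ^ 2)))
    ((hrc.sub (continuousOn_const.mul hqc)).add (continuousOn_const.mul hwc))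
    (fun t ht => nonneg_of_mul_nonneg_left ((hsq t ht).symm ▸ sq_nonneg _) (hw t ht)) ht₀
    (pos_of_mul_pos_left ((hsq t₀ ht₀).symm ▸ pow_two_pos_of_ne_zero (sub_ne_zero.mpr hqt₀))
      (hw t₀ ht₀).le)
  rw [intervalIntegral.integral_add (hri.sub (hqi.const_mul _)) (hwi.const_mul _),
    intervalIntegral.integral_sub hri (hqi.const_mul _), intervalIntegral.integral_const_mul,
    intervalIntegral.integral_const_mul] at hpos
  have hθ : θ ^ 2 * (∫ t in a..b, w t) - 2 * θ * ∫ t in a..b, q t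
      = -((∫ t in a..b, q t) ^ 2 / ∫ t in a..b, w t) := by
    simp only [θ]
    field_simp
    ring
  rw [← div_lt_iff₀' hW]
  linarith

/-- Hypotheses (i)–(vi); `ratio_deriv_num_nonpos` is (v), which says that the numerator of
`(φ''φ / φ'²)'` is nonpositive. -/
structure RatioHypotheses (φ M h : ℝ → ℝ) : Prop where
  φ_nonneg : ∀ x ∈ Ici (0:ℝ), 0 ≤ φ x
  M_pos : ∀ x ∈ Ici (0:ℝ), 0 < M x
  diff_φ : ∀ x ∈ Ioi (0:ℝ), DifferentiableAt ℝ φ x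
  diff_deriv_φ : ∀ x ∈ Ioi (0:ℝ), DifferentiableAt ℝ (deriv φ) x
  diff_deriv2_φ : ∀ x ∈ Ioi (0:ℝ), DifferentiableAt ℝ (deriv (deriv φ)) x
  diff_M : ∀ x ∈ Ioi (0:ℝ), DifferentiableAt ℝ M x
  diff_deriv_M : ∀ x ∈ Ioi (0:ℝ), DifferentiableAt ℝ (deriv M) x
  tendsto_ratio : ∃ L : ℝ, L < 1 ∧
    Tendsto (fun x => deriv (deriv φ) x * φ x / (deriv φ x) ^ 2) (𝓝[>] (0:ℝ)) (𝓝 L)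
  continuousWithinAt_M : ContinuousWithinAt M (Ici (0:ℝ)) 0
  continuousWithinAt_deriv_M : ContinuousWithinAt (deriv M) (Ici (0:ℝ)) 0
  deriv_M_neg : ∀ x ∈ Ioi (0:ℝ), deriv M x < 0
  deriv2_log_M_nonneg : ∀ x ∈ Ioi (0:ℝ), 0 ≤ deriv (deriv (fun y => Real.log (M y))) x
  deriv_φ_pos : ∀ x ∈ Ioi (0:ℝ), 0 < deriv φ x
  φ_eq_integral : ∀ x ∈ Ioi (0:ℝ), φ x = ∫ t in (0:ℝ)..x, deriv φ t
  ratio_deriv_num_nonpos : ∀ x ∈ Ioi (0:ℝ),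
    (deriv φ x) ^ 2 * deriv (deriv φ) x + φ x * deriv φ x * deriv (deriv (deriv φ)) x
      - 2 * φ x * (deriv (deriv φ) x) ^ 2 ≤ 0
  h_eq_integral : ∀ x ∈ Ioi (0:ℝ), h x = ∫ t in (0:ℝ)..x, deriv φ t * M t

namespace RatioHypotheses

variable {φ M h : ℝ → ℝ} {x : ℝ} (H : RatioHypotheses φ M h)
include H

theorem continuousOn_φ : ContinuousOn φ (Ioi 0) :=
  fun t ht => (H.diff_φ t ht).continuousAt.continuousWithinAt

theorem continuousOn_deriv_φ : ContinuousOn (deriv φ) (Ioi 0) :=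
  fun t ht => (H.diff_deriv_φ t ht).continuousAt.continuousWithinAt

theorem strictMonoOn_φ : StrictMonoOn φ (Ioi 0) :=
  strictMonoOn_of_deriv_pos (convex_Ioi 0) H.continuousOn_φ
    (by simpa only [interior_Ioi] using H.deriv_φ_pos)

theorem φ_pos (hx : 0 < x) : 0 < φ x :=
  (H.φ_nonneg (x / 2) (half_pos hx).le).trans_lt
    (H.strictMonoOn_φ (half_pos hx) hx (half_lt_self hx))

theorem intervalIntegrable_deriv_φ (hx : 0 < x) :
    IntervalIntegrable (deriv φ) volume 0 x := by
  by_contra hint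
  have := H.φ_eq_integral x hx
  rw [intervalIntegral.integral_undef hint] at this
  exact (H.φ_pos hx).ne' this

theorem tendsto_φ : Tendsto φ (𝓝[>] 0) (𝓝 0) :=
  tendsto_nhdsGT_of_eq_integral one_pos H.φ_eq_integral (H.intervalIntegrable_deriv_φ one_pos)

theorem antitoneOn_ratio :
    AntitoneOn (fun x => deriv (deriv φ) x * φ x / deriv φ x ^ 2) (Ioi 0) := by
  refine antitoneOn_Ioi_of_hasDerivAt_nonpos (fun x hx => ?_) fun x hx =>
    div_nonpos_of_nonpos_of_nonneg (H.ratio_deriv_num_nonpos x hx)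
      (pow_pos (H.deriv_φ_pos x hx) 3).le
  have hne := (H.deriv_φ_pos x hx).ne'
  refine (((H.diff_deriv2_φ x hx).hasDerivAt.mul (H.diff_φ x hx).hasDerivAt).div
    ((H.diff_deriv_φ x hx).hasDerivAt.pow 2) (pow_ne_zero 2 hne)).congr_deriv ?_
  simp only [Pi.mul_apply, Pi.pow_apply]
  field_simp
  ring

theorem ratio_lt_one (hx : 0 < x) :
    deriv (deriv φ) x * φ x / deriv φ x ^ 2 < 1 := by
  obtain ⟨L, hL, hlim⟩ := H.tendsto_ratio
  exact (H.antitoneOn_ratio.le_of_tendsto_nhdsGT hlim hx).trans_lt hL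

theorem hasDerivAt_div_deriv (hx : 0 < x) :
    HasDerivAt (fun s => φ s / deriv φ s) (1 - deriv (deriv φ) x * φ x / deriv φ x ^ 2) x := by
  have hne := (H.deriv_φ_pos x hx).ne'
  refine ((H.diff_φ x hx).hasDerivAt.div (H.diff_deriv_φ x hx).hasDerivAt hne).congr_deriv ?_
  field_simp

theorem hasDerivAt_sq_div_deriv (hx : 0 < x) :
    HasDerivAt (fun s => φ s ^ 2 / deriv φ s)
      ((2 - deriv (deriv φ) x * φ x / deriv φ x ^ 2) * φ x) x := by
  have hne := (H.deriv_φ_pos x hx).ne'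
  refine (((H.diff_φ x hx).hasDerivAt.pow 2).div (H.diff_deriv_φ x hx).hasDerivAt
    hne).congr_deriv ?_
  simp only [Pi.pow_apply]
  field_simp
  ring

theorem monotoneOn_div_deriv :
    MonotoneOn (fun s => φ s / deriv φ s) (Ioi 0) :=
  monotoneOn_Ioi_of_hasDerivAt_nonneg (fun _ hx => H.hasDerivAt_div_deriv hx)
    (fun _ hx => sub_nonneg.mpr (H.ratio_lt_one hx).le)

theorem monotoneOn_sq_div_deriv :
    MonotoneOn (fun s => φ s ^ 2 / deriv φ s) (Ioi 0) :=
  monotoneOn_Ioi_of_hasDerivAt_nonneg (fun _ hx => H.hasDerivAt_sq_div_deriv hx)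
    (fun _ hx => mul_nonneg (by linarith [H.ratio_lt_one hx]) (H.φ_pos hx).le)

theorem tendsto_sq_div_deriv :
    Tendsto (fun s => φ s ^ 2 / deriv φ s) (𝓝[>] 0) (𝓝 0) := by
  have hbound : Tendsto (fun s => φ s * (φ 1 / deriv φ 1)) (𝓝[>] 0) (𝓝 0) := by
    simpa using H.tendsto_φ.mul_const (φ 1 / deriv φ 1)
  refine squeeze_zero' ?_ ?_ hbound
  · filter_upwards [self_mem_nhdsWithin] with s hs
    exact div_nonneg (sq_nonneg _) (H.deriv_φ_pos s hs).le
  · filter_upwards [Ioo_mem_nhdsGT one_pos] with s hs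
    rw [sq, mul_div_assoc]
    exact mul_le_mul_of_nonneg_left (H.monotoneOn_div_deriv hs.1 (mem_Ioi.mpr one_pos) hs.2.le)
      (H.φ_pos hs.1).le

theorem continuousOn_M : ContinuousOn M (Ici 0) :=
  continuousOn_Ici_of_continuousWithinAt H.continuousWithinAt_M H.diff_M

theorem continuousOn_deriv_M : ContinuousOn (deriv M) (Ici 0) :=
  continuousOn_Ici_of_continuousWithinAt H.continuousWithinAt_deriv_M H.diff_deriv_M

theorem tendsto_M : Tendsto M (𝓝[>] 0) (𝓝 (M 0)) :=
  H.continuousWithinAt_M.tendsto.mono_left (nhdsWithin_mono _ Ioi_subset_Ici_self)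

theorem sq_deriv_M_le (hx : 0 < x) :
    deriv M x ^ 2 ≤ deriv (deriv M) x * M x := by
  have hM := H.M_pos x hx.le
  have hlog : ∀ᶠ y in 𝓝 x, HasDerivAt (fun y => Real.log (M y)) (deriv M y / M y) y := by
    filter_upwards [Ioi_mem_nhds hx] with y hy
    exact (H.diff_M y hy).hasDerivAt.log (H.M_pos y hy.out.le).ne'
  have h2 := hasDerivAt_deriv_of_eventually hlog
    ((H.diff_deriv_M x hx).hasDerivAt.div (H.diff_M x hx).hasDerivAt hM.ne')
  have := H.deriv2_log_M_nonneg x hx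
  rw [h2.deriv, le_div_iff₀ (by positivity), zero_mul] at this
  linarith [sq (deriv M x)]

theorem intervalIntegrable_deriv_φ_mul_M (hx : 0 < x) :
    IntervalIntegrable (fun t => deriv φ t * M t) volume 0 x :=
  (H.intervalIntegrable_deriv_φ hx).mul_continuousOn
    (H.continuousOn_M.mono (by rw [uIcc_of_le hx.le]; exact Icc_subset_Ici_self))

theorem intervalIntegrable_deriv_M_mul_φ (hx : 0 < x) :
    IntervalIntegrable (fun t => deriv M t * φ t) volume 0 x :=
  (intervalIntegrable_of_monotoneOn_of_nonneg hx.le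
    (H.strictMonoOn_φ.monotoneOn.mono Ioc_subset_Ioi_self)
    (fun t ht => (H.φ_pos ht.1).le)).continuousOn_mul
    (H.continuousOn_deriv_M.mono (by rw [uIcc_of_le hx.le]; exact Icc_subset_Ici_self))

theorem intervalIntegrable_sq_deriv_M_div_M_mul (hx : 0 < x) :
    IntervalIntegrable (fun t => deriv M t ^ 2 / M t * (φ t ^ 2 / deriv φ t)) volume 0 x :=
  (intervalIntegrable_of_monotoneOn_of_nonneg hx.le
    (H.monotoneOn_sq_div_deriv.mono Ioc_subset_Ioi_self)
    (fun t ht => div_nonneg (sq_nonneg _) (H.deriv_φ_pos t ht.1).le)).continuousOn_mul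
    (((H.continuousOn_deriv_M.pow 2).div H.continuousOn_M fun t ht => (H.M_pos t ht).ne').mono
      (by rw [uIcc_of_le hx.le]; exact Icc_subset_Ici_self))

theorem hasDerivAt_h (hx : 0 < x) : HasDerivAt h (deriv φ x * M x) x :=
  hasDerivAt_of_eq_integral hx H.h_eq_integral (H.intervalIntegrable_deriv_φ_mul_M hx)
    (H.continuousOn_deriv_φ.mul (H.continuousOn_M.mono Ioi_subset_Ici_self))

theorem h_pos (hx : 0 < x) : 0 < h x := by
  rw [H.h_eq_integral x hx]
  exact intervalIntegral.intervalIntegral_pos_of_pos_on (H.intervalIntegrable_deriv_φ_mul_M hx)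
    (fun t ht => mul_pos (H.deriv_φ_pos t ht.1) (H.M_pos t ht.1.le)) hx

theorem integral_deriv_M_mul_φ (hx : 0 < x) :
    ∫ t in (0:ℝ)..x, deriv M t * φ t = M x * φ x - h x := by
  have hMφ : Tendsto (fun t => M t * φ t) (𝓝[>] 0) (𝓝 0) := by
    simpa using H.tendsto_M.mul H.tendsto_φ
  rw [integral_deriv_mul_eq_sub_of_tendsto hx (fun t ht => (H.diff_M t ht.1).hasDerivAt)
    (fun t ht => (H.diff_φ t ht.1).hasDerivAt) hMφ (H.intervalIntegrable_deriv_M_mul_φ hx)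
    (by simpa only [mul_comm] using H.intervalIntegrable_deriv_φ_mul_M hx),
    H.h_eq_integral x hx]
  simp only [mul_comm (M _)]

theorem mul_lt_h (hx : 0 < x) : M x * φ x < h x := by
  have hneg : 0 < ∫ t in (0:ℝ)..x, -(deriv M t * φ t) :=
    intervalIntegral.intervalIntegral_pos_of_pos_on (H.intervalIntegrable_deriv_M_mul_φ hx).neg
      (fun t ht => neg_pos.mpr (mul_neg_of_neg_of_pos (H.deriv_M_neg t ht.1) (H.φ_pos ht.1))) hx
  rw [intervalIntegral.integral_neg, H.integral_deriv_M_mul_φ hx] at hneg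
  linarith

theorem exists_deriv_M_mul_φ_ne (hx : 0 < x) (θ : ℝ) :
    ∃ t ∈ Ioo 0 x, deriv M t * φ t ≠ θ * (deriv φ t * M t) := by
  by_contra! hprop
  have hmid : x / 2 ∈ Ioo 0 x := ⟨half_pos hx, half_lt_self hx⟩
  have hθ : θ < 0 := by
    have := hprop _ hmid
    have := mul_neg_of_neg_of_pos (H.deriv_M_neg _ hmid.1) (H.φ_pos hmid.1)
    have := mul_pos (H.deriv_φ_pos _ hmid.1) (H.M_pos _ hmid.1.le)
    nlinarith
  -- `log M - θ log φ` is constant on `(0, x)`, so `M = C φ ^ θ` would blow up at `0`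
  set G := fun t => Real.log (M t) - θ * Real.log (φ t)
  have hG : ∀ t ∈ Ioo 0 x, HasDerivAt G 0 t := by
    intro t ht
    have hM := H.M_pos t ht.1.le
    have hφ := H.φ_pos ht.1
    refine (((H.diff_M t ht.1).hasDerivAt.log hM.ne').sub
      (((H.diff_φ t ht.1).hasDerivAt.log hφ.ne').const_mul θ)).congr_deriv ?_
    field_simp
    linarith [hprop t ht]
  have hconst : ∀ t ∈ Ioo 0 x, G t = G (x / 2) := fun t ht =>
    isOpen_Ioo.is_const_of_deriv_eq_zero isPreconnected_Ioo
      (fun s hs => (hG s hs).differentiableAt.differentiableWithinAt)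
      (fun s hs => (hG s hs).deriv) ht hmid
  have hlogφ : Tendsto (fun t => Real.log (φ t)) (𝓝[>] 0) atBot :=
    tendsto_log_nhdsGT_zero.comp (tendsto_nhdsWithin_iff.mpr ⟨H.tendsto_φ,
      eventually_nhdsWithin_of_forall fun t ht => H.φ_pos ht⟩)
  have htop : Tendsto (fun t => Real.log (M t)) (𝓝[>] 0) atTop := by
    refine (tendsto_atTop_add_const_left _ (G (x / 2))
      (hlogφ.const_mul_atBot_of_neg hθ)).congr' ?_
    filter_upwards [Ioo_mem_nhdsGT hx] with t ht
    have := hconst t ht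
    simp only [G] at this ⊢
    linarith
  exact not_tendsto_atTop_of_tendsto_nhds
    ((continuousAt_log (H.M_pos 0 self_mem_Ici).ne').tendsto.comp H.tendsto_M) htop

theorem sq_sub_lt_mul_integral (hx : 0 < x) :
    (M x * φ x - h x) ^ 2
      < h x * ∫ t in (0:ℝ)..x, deriv M t ^ 2 / M t * (φ t ^ 2 / deriv φ t) := by
  have hM : ContinuousOn M (Ioo 0 x) := H.continuousOn_M.mono fun t ht => ht.1.le
  have hM' : ContinuousOn (deriv M) (Ioo 0 x) :=
    H.continuousOn_deriv_M.mono fun t ht => ht.1.le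
  have hφ : ContinuousOn φ (Ioo 0 x) := H.continuousOn_φ.mono Ioo_subset_Ioi_self
  have hφ' : ContinuousOn (deriv φ) (Ioo 0 x) := H.continuousOn_deriv_φ.mono Ioo_subset_Ioi_self
  have := sq_integral_lt_integral_mul_integral (q := fun t => deriv M t * φ t)
    (r := fun t => deriv M t ^ 2 / M t * (φ t ^ 2 / deriv φ t))
    (fun t ht => mul_pos (H.deriv_φ_pos t ht.1) (H.M_pos t ht.1.le))
    (fun t ht => by
      have := H.M_pos t ht.1.le
      have := H.deriv_φ_pos t ht.1
      field_simp)
    (hφ'.mul hM) (hM'.mul hφ)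
    (((hM'.pow 2).div hM fun t ht => (H.M_pos t ht.1.le).ne').mul
      ((hφ.pow 2).div hφ' fun t ht => (H.deriv_φ_pos t ht.1).ne'))
    (H.intervalIntegrable_deriv_φ_mul_M hx) (H.intervalIntegrable_deriv_M_mul_φ hx)
    (H.intervalIntegrable_sq_deriv_M_div_M_mul hx) (H.exists_deriv_M_mul_φ_ne hx)
  rwa [H.integral_deriv_M_mul_φ hx, ← H.h_eq_integral x hx] at this

theorem hasDerivAt_neg_deriv_M_mul_sq_div_deriv {t : ℝ} (ht : 0 < t) :
    HasDerivAt (fun s => -deriv M s * (φ s ^ 2 / deriv φ s))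
      (-deriv (deriv M) t * (φ t ^ 2 / deriv φ t)
        + -deriv M t * ((2 - deriv (deriv φ) t * φ t / deriv φ t ^ 2) * φ t)) t :=
  (H.diff_deriv_M t ht).hasDerivAt.neg.mul (H.hasDerivAt_sq_div_deriv ht)

theorem deriv_neg_deriv_M_mul_sq_div_deriv_le {t : ℝ} (ht : 0 < t) (htx : t ≤ x) :
    -deriv (deriv M) t * (φ t ^ 2 / deriv φ t)
        + -deriv M t * ((2 - deriv (deriv φ) t * φ t / deriv φ t ^ 2) * φ t)
      ≤ (deriv (deriv φ) x * φ x / deriv φ x ^ 2 - 2) * (deriv M t * φ t)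
        - deriv M t ^ 2 / M t * (φ t ^ 2 / deriv φ t) := by
  set c := deriv (deriv φ) x * φ x / deriv φ x ^ 2
  have hc : c ≤ deriv (deriv φ) t * φ t / deriv φ t ^ 2 :=
    H.antitoneOn_ratio ht (ht.trans_le htx) htx
  have hM := H.M_pos t ht.le
  have hφ := H.φ_pos ht
  have hφ' := H.deriv_φ_pos t ht
  have hM' := H.deriv_M_neg t ht
  have hconv := H.sq_deriv_M_le ht
  -- the first term of the gap is nonnegative because `ψ` is antitone, the second because `M` is
  -- log-convex
  have hgap : (c - 2) * (deriv M t * φ t) - deriv M t ^ 2 / M t * (φ t ^ 2 / deriv φ t)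
      - (-deriv (deriv M) t * (φ t ^ 2 / deriv φ t)
        + -deriv M t * ((2 - deriv (deriv φ) t * φ t / deriv φ t ^ 2) * φ t))
      = -deriv M t * φ t * (deriv (deriv φ) t * φ t / deriv φ t ^ 2 - c)
        + φ t ^ 2 / deriv φ t * ((deriv (deriv M) t * M t - deriv M t ^ 2) / M t) := by
    field_simp
    ring
  have : 0 ≤ -deriv M t * φ t * (deriv (deriv φ) t * φ t / deriv φ t ^ 2 - c)
        + φ t ^ 2 / deriv φ t * ((deriv (deriv M) t * M t - deriv M t ^ 2) / M t) :=
    add_nonneg (mul_nonneg (mul_nonneg (by linarith) hφ.le) (by linarith))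
      (mul_nonneg (by positivity) (div_nonneg (by linarith) hM.le))
  linarith

theorem neg_deriv_M_mul_sq_div_deriv_le (hx : 0 < x) :
    -deriv M x * (φ x ^ 2 / deriv φ x)
      ≤ (deriv (deriv φ) x * φ x / deriv φ x ^ 2 - 2) * (M x * φ x - h x)
        - ∫ t in (0:ℝ)..x, deriv M t ^ 2 / M t * (φ t ^ 2 / deriv φ t) := by
  have hE0 : Tendsto (fun s => -deriv M s * (φ s ^ 2 / deriv φ s)) (𝓝[>] 0) (𝓝 0) := by
    simpa using (H.continuousWithinAt_deriv_M.tendsto.mono_left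
      (nhdsWithin_mono _ Ioi_subset_Ici_self)).neg.mul H.tendsto_sq_div_deriv
  have hq := (H.intervalIntegrable_deriv_M_mul_φ hx).const_mul
    (deriv (deriv φ) x * φ x / deriv φ x ^ 2 - 2)
  have hr := H.intervalIntegrable_sq_deriv_M_div_M_mul hx
  have := sub_le_integral_of_hasDerivAt_of_tendsto hx
    (fun t ht => H.hasDerivAt_neg_deriv_M_mul_sq_div_deriv ht.1)
    (fun t ht => H.deriv_neg_deriv_M_mul_sq_div_deriv_le ht.1 ht.2.le) (hq.sub hr) hE0
  rwa [intervalIntegral.integral_sub hq hr, intervalIntegral.integral_const_mul,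
    H.integral_deriv_M_mul_φ hx, sub_zero] at this

theorem hasDerivAt_quot (hx : 0 < x) :
    HasDerivAt (fun y => h y / φ y)
      ((deriv φ x * M x * φ x - h x * deriv φ x) / φ x ^ 2) x :=
  (H.hasDerivAt_h hx).div (H.diff_φ x hx).hasDerivAt (H.φ_pos hx).ne'

theorem deriv_quot_neg (hx : 0 < x) : deriv (fun y => h y / φ y) x < 0 := by
  rw [(H.hasDerivAt_quot hx).deriv]
  refine div_neg_of_neg_of_pos ?_ (pow_pos (H.φ_pos hx) 2)
  have := H.mul_lt_h hx
  have := H.deriv_φ_pos x hx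
  nlinarith

theorem differentiableAt_deriv_quot (hx : 0 < x) :
    DifferentiableAt ℝ (deriv fun y => h y / φ y) x := by
  have hd : DifferentiableAt ℝ
      (fun y => (deriv φ y * M y * φ y - h y * deriv φ y) / φ y ^ 2) x :=
    ((((H.diff_deriv_φ x hx).mul (H.diff_M x hx)).mul (H.diff_φ x hx)).sub
      ((H.hasDerivAt_h hx).differentiableAt.mul (H.diff_deriv_φ x hx))).div
      ((H.diff_φ x hx).pow 2) (pow_pos (H.φ_pos hx) 2).ne'
  refine (hasDerivAt_deriv_of_eventually ?_ hd.hasDerivAt).differentiableAt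
  filter_upwards [Ioi_mem_nhds hx] with y hy using H.hasDerivAt_quot hy

theorem hasDerivAt_log_quot (hx : 0 < x) :
    HasDerivAt (fun y => Real.log (h y / φ y))
      (deriv φ x * M x / h x - deriv φ x / φ x) x := by
  refine (((H.hasDerivAt_h hx).log (H.h_pos hx).ne').sub
    ((H.diff_φ x hx).hasDerivAt.log (H.φ_pos hx).ne')).congr_of_eventuallyEq ?_
  filter_upwards [Ioi_mem_nhds hx] with y hy using log_div (H.h_pos hy).ne' (H.φ_pos hy).ne'

theorem hasDerivAt_deriv_log_quot (hx : 0 < x) :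
    HasDerivAt (deriv fun y => Real.log (h y / φ y))
      (((deriv (deriv φ) x * M x + deriv φ x * deriv M x) * h x
          - deriv φ x * M x * (deriv φ x * M x)) / h x ^ 2
        - (deriv (deriv φ) x * φ x - deriv φ x * deriv φ x) / φ x ^ 2) x := by
  refine hasDerivAt_deriv_of_eventually ?_
    ((((H.diff_deriv_φ x hx).hasDerivAt.mul (H.diff_M x hx).hasDerivAt).div (H.hasDerivAt_h hx)
      (H.h_pos hx).ne').sub
      ((H.diff_deriv_φ x hx).hasDerivAt.div (H.diff_φ x hx).hasDerivAt (H.φ_pos hx).ne'))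
  filter_upwards [Ioi_mem_nhds hx] with y hy using H.hasDerivAt_log_quot hy

theorem deriv2_log_quot_pos (hx : 0 < x) :
    0 < deriv (deriv fun y => Real.log (h y / φ y)) x := by
  rw [(H.hasDerivAt_deriv_log_quot hx).deriv]
  have hkey := H.neg_deriv_M_mul_sq_div_deriv_le hx
  have hcs := H.sq_sub_lt_mul_integral hx
  set B := ∫ t in (0:ℝ)..x, deriv M t ^ 2 / M t * (φ t ^ 2 / deriv φ t)
  have hh := H.h_pos hx
  have hφ := H.φ_pos hx
  have hφ' := H.deriv_φ_pos x hx
  have hid : ((deriv (deriv φ) x * M x + deriv φ x * deriv M x) * h x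
          - deriv φ x * M x * (deriv φ x * M x)) / h x ^ 2
        - (deriv (deriv φ) x * φ x - deriv φ x * deriv φ x) / φ x ^ 2
      = deriv φ x ^ 2 / (h x ^ 2 * φ x ^ 2)
        * (h x * ((deriv (deriv φ) x * φ x / deriv φ x ^ 2 - 2) * (M x * φ x - h x) - B
            - -deriv M x * (φ x ^ 2 / deriv φ x))
          + (h x * B - (M x * φ x - h x) ^ 2)) := by
    field_simp
    ring
  rw [hid]
  exact mul_pos (by positivity)
    (add_pos_of_nonneg_of_pos (mul_nonneg hh.le (by linarith)) (by linarith))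

end RatioHypotheses

theorem stmt9_general
    (φ M h : ℝ → ℝ)
    (hφnn : ∀ x ∈ Ici (0:ℝ), 0 ≤ φ x)
    (hMpos : ∀ x ∈ Ici (0:ℝ), 0 < M x)
    (hφ1 : ∀ x ∈ Ioi (0:ℝ), DifferentiableAt ℝ φ x)
    (hφ2 : ∀ x ∈ Ioi (0:ℝ), DifferentiableAt ℝ (deriv φ) x)
    (hφ3 : ∀ x ∈ Ioi (0:ℝ), DifferentiableAt ℝ (deriv (deriv φ)) x)
    (hM1 : ∀ x ∈ Ioi (0:ℝ), DifferentiableAt ℝ M x)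
    (hM2 : ∀ x ∈ Ioi (0:ℝ), DifferentiableAt ℝ (deriv M) x)
    -- (i) the right-hand limit of φ''φ/φ'² at 0 is < 1
    (hlim : ∃ L : ℝ, L < 1 ∧
      Tendsto (fun x => deriv (deriv φ) x * φ x / (deriv φ x) ^ 2) (𝓝[>] (0:ℝ)) (𝓝 L))
    -- (ii) M and M' are continuous from the right at 0 (with finite values)
    (hMright : ContinuousWithinAt M (Ici (0:ℝ)) 0)
    (hM'right : ContinuousWithinAt (deriv M) (Ici (0:ℝ)) 0)
    -- (iii)
    (hM' : ∀ x ∈ Ioi (0:ℝ), deriv M x < 0)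
    (hlogM : ∀ x ∈ Ioi (0:ℝ), 0 ≤ deriv (deriv (fun y => Real.log (M y))) x)
    -- (iv)
    (hφ' : ∀ x ∈ Ioi (0:ℝ), 0 < deriv φ x)
    (hφint : ∀ x ∈ Ioi (0:ℝ), φ x = ∫ t in (0:ℝ)..x, deriv φ t)
    -- (v)
    (hE1 : ∀ x ∈ Ioi (0:ℝ),
      (deriv φ x) ^ 2 * deriv (deriv φ) x
        + φ x * deriv φ x * deriv (deriv (deriv φ)) x
        - 2 * φ x * (deriv (deriv φ) x) ^ 2 ≤ 0)
    -- (vi)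
    (hh : ∀ x ∈ Ioi (0:ℝ), h x = ∫ t in (0:ℝ)..x, deriv φ t * M t) :
    let g : ℝ → ℝ := fun x => h x / φ x
    (∀ x ∈ Ioi (0:ℝ), DifferentiableAt ℝ g x ∧ DifferentiableAt ℝ (deriv g) x) ∧
    (∀ x ∈ Ioi (0:ℝ), DifferentiableAt ℝ (fun y => Real.log (g y)) x ∧
      DifferentiableAt ℝ (deriv (fun y => Real.log (g y))) x) ∧
    (∀ x ∈ Ioi (0:ℝ), deriv g x < 0) ∧
    (∀ x ∈ Ioi (0:ℝ), 0 < deriv (deriv (fun y => Real.log (g y))) x) := by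
  intro g
  have H : RatioHypotheses φ M h :=
    ⟨hφnn, hMpos, hφ1, hφ2, hφ3, hM1, hM2, hlim, hMright, hM'right, hM', hlogM, hφ', hφint, hE1, hh⟩
  exact ⟨fun x hx => ⟨(H.hasDerivAt_quot hx).differentiableAt, H.differentiableAt_deriv_quot hx⟩,
    fun x hx => ⟨(H.hasDerivAt_log_quot hx).differentiableAt,
      (H.hasDerivAt_deriv_log_quot hx).differentiableAt⟩,
    fun x hx => H.deriv_quot_neg hx, fun x hx => H.deriv2_log_quot_pos hx⟩

/-- Theorem 6 (Theorem 2 of the paper): under hypotheses (i)–(vi), with base point `0`,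
the quotient `h/φ` and `log (h/φ)` are twice differentiable on `(0,∞)`,
`(h/φ)' < 0` and `(log (h/φ))'' > 0` on `(0,∞)`. -/
theorem stmt9
    (φ M h : ℝ → ℝ)
    (hφnn : ∀ x ∈ Ici (0:ℝ), 0 ≤ φ x)
    (hMpos : ∀ x ∈ Ici (0:ℝ), 0 < M x)
    (hhnn : ∀ x ∈ Ici (0:ℝ), 0 ≤ h x)
    (hφ1 : ∀ x ∈ Ioi (0:ℝ), DifferentiableAt ℝ φ x)
    (hφ2 : ∀ x ∈ Ioi (0:ℝ), DifferentiableAt ℝ (deriv φ) x)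
    (hφ3 : ∀ x ∈ Ioi (0:ℝ), DifferentiableAt ℝ (deriv (deriv φ)) x)
    (hM1 : ∀ x ∈ Ioi (0:ℝ), DifferentiableAt ℝ M x)
    (hM2 : ∀ x ∈ Ioi (0:ℝ), DifferentiableAt ℝ (deriv M) x)
    -- (i) the right-hand limit of φ''φ/φ'² at 0 is < 1
    (hlim : ∃ L : ℝ, L < 1 ∧
      Tendsto (fun x => deriv (deriv φ) x * φ x / (deriv φ x) ^ 2) (𝓝[>] (0:ℝ)) (𝓝 L))
    -- (ii) M and M' are continuous from the right at 0 (with finite values)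
    (hMright : ContinuousWithinAt M (Ici (0:ℝ)) 0)
    (hM'right : ContinuousWithinAt (deriv M) (Ici (0:ℝ)) 0)
    -- (iii)
    (hM' : ∀ x ∈ Ioi (0:ℝ), deriv M x < 0)
    (hlogM : ∀ x ∈ Ioi (0:ℝ), 0 ≤ deriv (deriv (fun y => Real.log (M y))) x)
    -- (iv)
    (hφ' : ∀ x ∈ Ioi (0:ℝ), 0 < deriv φ x)
    (hφint : ∀ x ∈ Ioi (0:ℝ), φ x = ∫ t in (0:ℝ)..x, deriv φ t)
    -- (v)
    (hE1 : ∀ x ∈ Ioi (0:ℝ),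
      (deriv φ x) ^ 2 * deriv (deriv φ) x
        + φ x * deriv φ x * deriv (deriv (deriv φ)) x
        - 2 * φ x * (deriv (deriv φ) x) ^ 2 ≤ 0)
    -- (vi)
    (hh : ∀ x ∈ Ioi (0:ℝ), h x = ∫ t in (0:ℝ)..x, deriv φ t * M t) :
    let g : ℝ → ℝ := fun x => h x / φ x
    (∀ x ∈ Ioi (0:ℝ), DifferentiableAt ℝ g x ∧ DifferentiableAt ℝ (deriv g) x) ∧
    (∀ x ∈ Ioi (0:ℝ), DifferentiableAt ℝ (fun y => Real.log (g y)) x ∧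
      DifferentiableAt ℝ (deriv (fun y => Real.log (g y))) x) ∧
    (∀ x ∈ Ioi (0:ℝ), deriv g x < 0) ∧
    (∀ x ∈ Ioi (0:ℝ), 0 < deriv (deriv (fun y => Real.log (g y))) x) :=
  stmt9_general φ M h hφnn hMpos hφ1 hφ2 hφ3 hM1 hM2 hlim hMright hM'right hM' hlogM hφ' hφint hE1
    hh
end

section
/- Under the stated hypotheses, the quotient h/φ admits the asymptotic expansion h(x)/φ(x) = M(1) + (1/2)·M'(1)·(x−1) + (1/6)·( M''(1) + (φ''(1)/(2φ'(1)))·M'(1) )·(x−1)² + o((x−1)²) as x → 1; in particular, with the value at x = 1 defined to be M(1), the function h/φ is twice differentiable on (0,∞) with (h/φ)'(1) = (1/2)·M'(1) and (h/φ)''(1) = (1/3)·( M''(1) + (φ''(1)/(2φ'(1)))·M'(1) ). -/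
open Real Set Filter Topology MeasureTheory Asymptotics

/-!
Write `Q` for the quadratic polynomial of the expansion. Since `h' = φ' M`, the function `h - Q φ` has
derivative `φ' (M - Q) - Q' φ`, which is `o((x - 1)²)` by the second-order Taylor expansions
of `M`, `φ` and the first-order one of `φ'`: the coefficients of `Q` are exactly those that
cancel the terms in `x - 1` and `(x - 1)²`. Hence `h - Q φ = o((x - 1)³)`, and dividing by
`φ ≍ x - 1` gives `h / φ - Q = o((x - 1)²)`. Off `1` the derivative of `g = h / φ` is
`φ' (M - g) / φ`, and `φ' (M - g) - Q' φ` is the same defect plus `φ' (Q - g) = o((x - 1)²)`;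
dividing by `φ` once more gives `g' - Q' = o(x - 1)`, so `g''(1) = Q''(1)`.
-/
theorem HasDerivAt.isBigO_sub_rev {f : ℝ → ℝ} {f' x : ℝ} (hf : HasDerivAt f f' x) (hf' : f' ≠ 0) :
    (fun y => y - x) =O[𝓝 x] fun y => f y - f x :=
  (HasDerivAtFilter.isTheta_sub hf hf').isBigO_symm.comp_tendsto
    (tendsto_id.prodMk tendsto_const_pure)

theorem Asymptotics.IsLittleO.div_of_isBigO {α 𝕜 : Type*} [NormedField 𝕜] {l : Filter α}
    {F w v φ : α → 𝕜} (hF : F =o[l] fun x => w x * v x) (hv : v =O[l] φ) :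
    (fun x => F x / φ x) =o[l] w := by
  obtain ⟨C, hC, hCv⟩ := hv.exists_pos
  refine isLittleO_iff.2 fun ε hε => ?_
  filter_upwards [hF.bound (div_pos hε hC), hCv.bound] with x hFx hvx
  rcases eq_or_ne (φ x) 0 with hφ | hφ
  · rw [hφ, div_zero, norm_zero]
    positivity
  rw [norm_div, div_le_iff₀ (norm_pos_iff.2 hφ)]
  calc ‖F x‖ ≤ ε / C * (‖w x‖ * ‖v x‖) := by simpa [norm_mul] using hFx
    _ ≤ ε / C * (‖w x‖ * (C * ‖φ x‖)) := by gcongr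
    _ = ε * ‖w x‖ * ‖φ x‖ := by field_simp

theorem isLittleO_pow_succ_of_hasDerivAt {f f' : ℝ → ℝ} {a : ℝ} {n : ℕ}
    (hf : ∀ᶠ x in 𝓝 a, HasDerivAt f (f' x) x) (hf' : f' =o[𝓝 a] fun x => (x - a) ^ n) :
    (fun x => f x - f a) =o[𝓝 a] fun x => (x - a) ^ (n + 1) := by
  obtain ⟨δ, hδ, hball⟩ := Metric.eventually_nhds_iff_ball.1 hf
  have hnhds : 𝓝[Metric.ball a δ] a = 𝓝 a :=
    Metric.isOpen_ball.nhdsWithin_eq (Metric.mem_ball_self hδ)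
  have := (convex_ball a δ).isLittleO_pow_succ_real (Metric.mem_ball_self hδ)
    (fun x hx => (hball x hx).hasDerivWithinAt) (hnhds ▸ hf')
  rwa [hnhds] at this

theorem hasDerivAt_quadratic (c₀ c₁ c₂ a x : ℝ) :
    HasDerivAt (fun y => c₀ + c₁ * (y - a) + c₂ * (y - a) ^ 2) (c₁ + 2 * c₂ * (x - a)) x := by
  have hu := (hasDerivAt_id' x).sub_const a
  exact (((hu.const_mul c₁).const_add c₀).fun_add ((hu.fun_pow 2).const_mul c₂)).congr_deriv
    (by ring)

theorem taylor_isLittleO_two {f f' : ℝ → ℝ} {a d : ℝ}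
    (hf : ∀ᶠ x in 𝓝 a, HasDerivAt f (f' x) x) (hf' : HasDerivAt f' d a) :
    (fun x => f x - (f a + f' a * (x - a) + d / 2 * (x - a) ^ 2)) =o[𝓝 a]
      fun x => (x - a) ^ 2 := by
  have hrem : (fun x => f' x - (f' a + d * (x - a))) =o[𝓝 a] fun x => (x - a) ^ 1 := by
    simpa [sub_sub, mul_comm] using hasDerivAt_iff_isLittleO.1 hf'
  have := isLittleO_pow_succ_of_hasDerivAt
    (f := fun x => f x - (f a + f' a * (x - a) + d / 2 * (x - a) ^ 2)) (hf.mono fun x hx => ?_) hrem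
  · simpa using this
  · exact (hx.fun_sub (hasDerivAt_quadratic (f a) (f' a) (d / 2) a x)).congr_deriv (by ring)

theorem hasDerivAt_of_isLittleO_nhdsNE {f : ℝ → ℝ} {a c : ℝ}
    (hf : (fun x => f x - f a - (x - a) * c) =o[𝓝[≠] a] fun x => x - a) : HasDerivAt f c a := by
  rw [hasDerivAt_iff_isLittleO, ← nhdsNE_sup_pure, isLittleO_sup]
  exact ⟨by simpa using hf, by simp [isLittleO_pure]⟩

theorem hasDerivAt_of_isLittleO_sub_quadratic {f : ℝ → ℝ} {a c₁ c₂ : ℝ}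
    (hf : (fun x => f x - (f a + c₁ * (x - a) + c₂ * (x - a) ^ 2)) =o[𝓝[≠] a]
      fun x => (x - a) ^ 2) : HasDerivAt f c₁ a := by
  have hsq : (fun x => (x - a) ^ 2) =o[𝓝[≠] a] fun x => x - a := by
    simpa using (isLittleO_pow_sub_pow_sub a one_lt_two).mono nhdsWithin_le_nhds
  refine hasDerivAt_of_isLittleO_nhdsNE ((hf.trans hsq).add (hsq.const_mul_left c₂) |>.congr_left
    fun x => ?_)
  ring

theorem hasDerivAt_of_forall_eq_integral {f F : ℝ → ℝ} {s : Set ℝ} {c x : ℝ} (hs : IsOpen s)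
    (hs' : s.OrdConnected) (hc : c ∈ s) (hf : ContinuousOn f s)
    (hF : ∀ y ∈ s, F y = ∫ t in c..y, f t) (hx : x ∈ s) : HasDerivAt F (f x) x :=
  (intervalIntegral.integral_hasDerivAt_right
    ((hf.mono (hs'.uIcc_subset hc hx)).intervalIntegrable) (hf.stronglyMeasurableAtFilter hs x hx)
    (hf.continuousAt (hs.mem_nhds hx))).congr_of_eventuallyEq (eventually_of_mem (hs.mem_nhds hx) hF)

theorem hasDerivAt_of_eventuallyEq_div {g h φ φ' M : ℝ → ℝ} {x : ℝ}
    (hg : g =ᶠ[𝓝 x] fun y => h y / φ y) (hh : HasDerivAt h (φ' x * M x) x)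
    (hφ : HasDerivAt φ (φ' x) x) (hφx : φ x ≠ 0) :
    HasDerivAt g (φ' x * (M x - h x / φ x) / φ x) x :=
  ((hh.div hφ hφx).congr_deriv (by field_simp)).congr_of_eventuallyEq hg

theorem differentiableAt_deriv_of_eventuallyEq_div {g h φ φ' M : ℝ → ℝ} {x : ℝ}
    (hg : g =ᶠ[𝓝 x] fun y => h y / φ y) (hh : ∀ᶠ y in 𝓝 x, HasDerivAt h (φ' y * M y) y)
    (hφ : ∀ᶠ y in 𝓝 x, HasDerivAt φ (φ' y) y) (hφ' : DifferentiableAt ℝ φ' x)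
    (hM : DifferentiableAt ℝ M x) (hφx : φ x ≠ 0) : DifferentiableAt ℝ (deriv g) x := by
  have hφne : ∀ᶠ y in 𝓝 x, φ y ≠ 0 := hφ.self_of_nhds.continuousAt.eventually_ne hφx
  have hderiv : deriv g =ᶠ[𝓝 x] fun y => φ' y * (M y - h y / φ y) / φ y := by
    filter_upwards [hg.eventually_nhds, hh, hφ, hφne] with y hgy hhy hφy hφy0
    exact (hasDerivAt_of_eventuallyEq_div hgy hhy hφy hφy0).deriv
  have hhx := hh.self_of_nhds.differentiableAt
  have hφx' := hφ.self_of_nhds.differentiableAt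
  exact hderiv.differentiableAt_iff.2 ((hφ'.mul (hM.sub (hhx.div hφx' hφx))).div hφx' hφx)

section QuotientExpansion

variable {φ φ' M M' h : ℝ → ℝ} {a a₂ m₂ : ℝ}

local notation "κ" => m₂ + a₂ / (2 * φ' a) * M' a

theorem isLittleO_mul_sub_quadratic_sub
    (hφ : ∀ᶠ x in 𝓝 a, HasDerivAt φ (φ' x) x) (hφ' : HasDerivAt φ' a₂ a)
    (hM : ∀ᶠ x in 𝓝 a, HasDerivAt M (M' x) x) (hM' : HasDerivAt M' m₂ a)
    (hφa : φ a = 0) (ha : φ' a ≠ 0) :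
    (fun x => φ' x * (M x - (M a + 1 / 2 * M' a * (x - a) + 1 / 6 * κ * (x - a) ^ 2))
        - (1 / 2 * M' a + 1 / 3 * κ * (x - a)) * φ x) =o[𝓝 a] fun x => (x - a) ^ 2 := by
  have rφ' : (fun x => φ' x - (φ' a + a₂ * (x - a))) =o[𝓝 a] fun x => x - a := by
    simpa [sub_sub, mul_comm] using hasDerivAt_iff_isLittleO.1 hφ'
  have rM := taylor_isLittleO_two hM hM'
  have rφ := taylor_isLittleO_two hφ hφ'
  rw [hφa] at rφ
  have hB : (fun x => (1 / 2 * M' a + (m₂ / 2 - κ / 6) * (x - a)) * (x - a)) =O[𝓝 a]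
      fun x => x - a := by
    have : Tendsto (fun x => 1 / 2 * M' a + (m₂ / 2 - κ / 6) * (x - a)) (𝓝 a) _ :=
      (Continuous.tendsto (by fun_prop) a)
    simpa using (this.isBigO_one ℝ).mul (isBigO_refl (fun x => x - a) (𝓝 a))
  have hφ'O : φ' =O[𝓝 a] fun _ => (1 : ℝ) := hφ'.continuousAt.tendsto.isBigO_one ℝ
  have hQ'O : (fun x => 1 / 2 * M' a + 1 / 3 * κ * (x - a)) =O[𝓝 a] fun _ => (1 : ℝ) :=
    (Continuous.tendsto (by fun_prop) a).isBigO_one ℝ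
  have hcube : (fun x => (x - a) ^ 3) =o[𝓝 a] fun x => (x - a) ^ 2 :=
    (isLittleO_pow_pow (by norm_num : 2 < 3)).comp_tendsto (tendsto_sub_nhds_zero_iff.2 tendsto_id)
  have := ((((rφ'.mul_isBigO hB).congr_right fun x => (sq (x - a)).symm).add
    ((hφ'O.mul_isLittleO rM).congr_right fun x => one_mul _)).sub
    ((hQ'O.mul_isLittleO rφ).congr_right fun x => one_mul _)).add
    (hcube.const_mul_left (a₂ * (m₂ / 2 - κ / 3)))
  refine this.congr_left fun x => ?_
  linear_combination (1 / 4 * a₂ * M' a * (x - a) ^ 2) * mul_inv_cancel₀ ha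

theorem isLittleO_sub_quadratic_mul
    (hφ : ∀ᶠ x in 𝓝 a, HasDerivAt φ (φ' x) x) (hφ' : HasDerivAt φ' a₂ a)
    (hM : ∀ᶠ x in 𝓝 a, HasDerivAt M (M' x) x) (hM' : HasDerivAt M' m₂ a)
    (hh : ∀ᶠ x in 𝓝 a, HasDerivAt h (φ' x * M x) x) (hφa : φ a = 0) (hha : h a = 0)
    (ha : φ' a ≠ 0) :
    (fun x => h x - (M a + 1 / 2 * M' a * (x - a) + 1 / 6 * κ * (x - a) ^ 2) * φ x) =o[𝓝 a]
      fun x => (x - a) ^ 3 := by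
  have := isLittleO_pow_succ_of_hasDerivAt
    (f := fun x => h x - (M a + 1 / 2 * M' a * (x - a) + 1 / 6 * κ * (x - a) ^ 2) * φ x)
    ((hh.and hφ).mono fun x hx => ?_) (isLittleO_mul_sub_quadratic_sub hφ hφ' hM hM' hφa ha)
  · simpa [hφa, hha] using this
  · exact (hx.1.fun_sub ((hasDerivAt_quadratic _ _ _ a x).fun_mul hx.2)).congr_deriv (by ring)

theorem isLittleO_div_sub_quadratic
    (hφ : ∀ᶠ x in 𝓝 a, HasDerivAt φ (φ' x) x) (hφ' : HasDerivAt φ' a₂ a)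
    (hM : ∀ᶠ x in 𝓝 a, HasDerivAt M (M' x) x) (hM' : HasDerivAt M' m₂ a)
    (hh : ∀ᶠ x in 𝓝 a, HasDerivAt h (φ' x * M x) x) (hφa : φ a = 0) (hha : h a = 0)
    (ha : φ' a ≠ 0) :
    (fun x => h x / φ x - (M a + 1 / 2 * M' a * (x - a) + 1 / 6 * κ * (x - a) ^ 2)) =o[𝓝[≠] a]
      fun x => (x - a) ^ 2 := by
  have hφne : ∀ᶠ x in 𝓝[≠] a, φ x ≠ 0 := by
    simpa [hφa] using hφ.self_of_nhds.eventually_ne ha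
  have hO : (fun x => x - a) =O[𝓝[≠] a] φ := by
    simpa [hφa] using (hφ.self_of_nhds.isBigO_sub_rev ha).mono nhdsWithin_le_nhds
  have := (((isLittleO_sub_quadratic_mul hφ hφ' hM hM' hh hφa hha ha).mono
    nhdsWithin_le_nhds).congr_right fun x => pow_succ (x - a) 2).div_of_isBigO hO
  exact this.congr' (hφne.mono fun x hx => by field_simp) EventuallyEq.rfl

variable {g : ℝ → ℝ}

theorem hasDerivAt_div_extension
    (hφ : ∀ᶠ x in 𝓝 a, HasDerivAt φ (φ' x) x) (hφ' : HasDerivAt φ' a₂ a)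
    (hM : ∀ᶠ x in 𝓝 a, HasDerivAt M (M' x) x) (hM' : HasDerivAt M' m₂ a)
    (hh : ∀ᶠ x in 𝓝 a, HasDerivAt h (φ' x * M x) x) (hφa : φ a = 0) (hha : h a = 0)
    (ha : φ' a ≠ 0) (hga : g a = M a) (hg : ∀ x ≠ a, g x = h x / φ x) :
    HasDerivAt g (1 / 2 * M' a) a := by
  refine hasDerivAt_of_isLittleO_sub_quadratic (c₂ := 1 / 6 * κ) ?_
  rw [hga]
  exact (isLittleO_div_sub_quadratic hφ hφ' hM hM' hh hφa hha ha).congr'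
    (eventually_mem_nhdsWithin.mono fun x hx => by simp only [hg x hx]) EventuallyEq.rfl

theorem hasDerivAt_deriv_div_extension
    (hφ : ∀ᶠ x in 𝓝 a, HasDerivAt φ (φ' x) x) (hφ' : HasDerivAt φ' a₂ a)
    (hM : ∀ᶠ x in 𝓝 a, HasDerivAt M (M' x) x) (hM' : HasDerivAt M' m₂ a)
    (hh : ∀ᶠ x in 𝓝 a, HasDerivAt h (φ' x * M x) x) (hφa : φ a = 0) (hha : h a = 0)
    (ha : φ' a ≠ 0) (hga : g a = M a) (hg : ∀ x ≠ a, g x = h x / φ x) :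
    HasDerivAt (deriv g) (1 / 3 * κ) a := by
  refine hasDerivAt_of_isLittleO_nhdsNE ?_
  rw [(hasDerivAt_div_extension hφ hφ' hM hM' hh hφa hha ha hga hg).deriv]
  have hφne : ∀ᶠ x in 𝓝[≠] a, φ x ≠ 0 := by
    simpa [hφa] using hφ.self_of_nhds.eventually_ne ha
  have hO : (fun x => x - a) =O[𝓝[≠] a] φ := by
    simpa [hφa] using (hφ.self_of_nhds.isBigO_sub_rev ha).mono nhdsWithin_le_nhds
  have hderiv : ∀ᶠ x in 𝓝[≠] a, deriv g x = φ' x * (M x - h x / φ x) / φ x := by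
    filter_upwards [eventually_mem_nhdsWithin, hφne, eventually_nhdsWithin_of_eventually_nhds hh,
      eventually_nhdsWithin_of_eventually_nhds hφ] with x hx hφx hhx hφ'x
    exact (hasDerivAt_of_eventuallyEq_div ((eventually_ne_nhds hx).mono hg) hhx hφ'x hφx).deriv
  have hφ'O : φ' =O[𝓝[≠] a] fun _ => (1 : ℝ) :=
    (hφ'.continuousAt.tendsto.isBigO_one ℝ).mono nhdsWithin_le_nhds
  have hnum := ((isLittleO_mul_sub_quadratic_sub hφ hφ' hM hM' hφa ha).mono
    nhdsWithin_le_nhds).sub ((hφ'O.mul_isLittleO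
      (isLittleO_div_sub_quadratic hφ hφ' hM hM' hh hφa hha ha)).congr_right fun x => one_mul _)
  refine ((hnum.congr_right fun x => sq (x - a)).div_of_isBigO hO).congr' ?_ EventuallyEq.rfl
  filter_upwards [hderiv, hφne] with x hx hφx
  rw [hx]
  field_simp
  ring

end QuotientExpansion

theorem stmt12_general
    (φ M h : ℝ → ℝ)
    (hφ1 : ∀ x ∈ Ioi (0:ℝ), DifferentiableAt ℝ φ x)
    (hφ2 : ∀ x ∈ Ioi (0:ℝ), DifferentiableAt ℝ (deriv φ) x)
    (hM1 : ∀ x ∈ Ioi (0:ℝ), DifferentiableAt ℝ M x)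
    (hM2 : ∀ x ∈ Ioi (0:ℝ), DifferentiableAt ℝ (deriv M) x)
    (hφ' : ∀ x ∈ Ioi (0:ℝ), 0 < deriv φ x)
    (hφint : ∀ x ∈ Ioi (0:ℝ), φ x = ∫ t in (1:ℝ)..x, deriv φ t)
    (hh : ∀ x ∈ Ioi (0:ℝ), h x = ∫ t in (1:ℝ)..x, deriv φ t * M t) :
    let g : ℝ → ℝ := fun x => if x = 1 then M 1 else h x / φ x
    (fun x => h x / φ x -
        (M 1 + (1/2) * deriv M 1 * (x - 1)
          + (1/6) * (deriv (deriv M) 1 + deriv (deriv φ) 1 / (2 * deriv φ 1) * deriv M 1)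
              * (x - 1) ^ 2))
      =o[𝓝[≠] (1:ℝ)] (fun x => (x - 1) ^ 2) ∧
    (∀ x ∈ Ioi (0:ℝ), DifferentiableAt ℝ g x ∧ DifferentiableAt ℝ (deriv g) x) ∧
    deriv g 1 = (1/2) * deriv M 1 ∧
    deriv (deriv g) 1 =
      (1/3) * (deriv (deriv M) 1 + deriv (deriv φ) 1 / (2 * deriv φ 1) * deriv M 1) := by
  intro g
  have h1 : (1 : ℝ) ∈ Ioi 0 := mem_Ioi.2 one_pos
  have near : ∀ {P : ℝ → Prop}, (∀ x ∈ Ioi (0 : ℝ), P x) → ∀ x ∈ Ioi (0 : ℝ), ∀ᶠ y in 𝓝 x, P y :=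
    fun hP x hx => eventually_of_mem (isOpen_Ioi.mem_nhds hx) hP
  have hφd : ∀ x ∈ Ioi (0 : ℝ), HasDerivAt φ (deriv φ x) x := fun x hx => (hφ1 x hx).hasDerivAt
  have hhd : ∀ x ∈ Ioi (0 : ℝ), HasDerivAt h (deriv φ x * M x) x :=
    fun x => hasDerivAt_of_forall_eq_integral isOpen_Ioi ordConnected_Ioi h1
      (fun y hy => ((hφ2 y hy).continuousAt.mul (hM1 y hy).continuousAt).continuousWithinAt) hh
  have hφ0 : φ 1 = 0 := by simp [hφint 1 h1]
  have hh0 : h 1 = 0 := by simp [hh 1 h1]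
  have hφne : ∀ x ∈ Ioi (0 : ℝ), x ≠ 1 → φ x ≠ 0 := by
    have hmono := strictMonoOn_of_deriv_pos (convex_Ioi 0)
      (fun x hx => (hφ1 x hx).continuousAt.continuousWithinAt) (by simpa using hφ')
    exact fun x hx hx1 => hφ0 ▸ hmono.injOn.ne hx h1 hx1
  have hga : g 1 = M 1 := if_pos rfl
  have hg : ∀ x ≠ 1, g x = h x / φ x := fun x hx => if_neg hx
  have hφ₁ := near hφd 1 h1
  have hM₁ := near (fun x hx => (hM1 x hx).hasDerivAt) 1 h1
  have hh₁ := near hhd 1 h1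
  have hg1 := hasDerivAt_div_extension hφ₁ (hφ2 1 h1).hasDerivAt hM₁ (hM2 1 h1).hasDerivAt hh₁
    hφ0 hh0 (hφ' 1 h1).ne' hga hg
  have hg2 := hasDerivAt_deriv_div_extension hφ₁ (hφ2 1 h1).hasDerivAt hM₁ (hM2 1 h1).hasDerivAt
    hh₁ hφ0 hh0 (hφ' 1 h1).ne' hga hg
  refine ⟨isLittleO_div_sub_quadratic hφ₁ (hφ2 1 h1).hasDerivAt hM₁ (hM2 1 h1).hasDerivAt hh₁
    hφ0 hh0 (hφ' 1 h1).ne', fun x hx => ?_, hg1.deriv, hg2.deriv⟩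
  rcases eq_or_ne x 1 with rfl | hx1
  · exact ⟨hg1.differentiableAt, hg2.differentiableAt⟩
  have hgx : g =ᶠ[𝓝 x] fun y => h y / φ y := (eventually_ne_nhds hx1).mono hg
  have hφx := hφne x hx hx1
  exact ⟨(hasDerivAt_of_eventuallyEq_div hgx (hhd x hx) (hφd x hx) hφx).differentiableAt,
    differentiableAt_deriv_of_eventuallyEq_div hgx (near hhd x hx) (near hφd x hx) (hφ2 x hx)
      (hM1 x hx) hφx⟩

/-- Claim in the proof of Theorem 1: asymptotic expansion of `h/φ` at `x = 1`:
`h/φ = M(1) + ½M'(1)(x−1) + ⅙(M''(1) + φ''(1)/(2φ'(1))·M'(1))(x−1)² + o((x−1)²)`;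
in particular `h/φ` (with value `M 1` at `1`) is twice differentiable on `(0,∞)`
with the indicated first and second derivatives at `x = 1`. -/
theorem stmt12
    (φ M h : ℝ → ℝ)
    (hφ1 : ∀ x ∈ Ioi (0:ℝ), DifferentiableAt ℝ φ x)
    (hφ2 : ∀ x ∈ Ioi (0:ℝ), DifferentiableAt ℝ (deriv φ) x)
    (hφ3 : ∀ x ∈ Ioi (0:ℝ), DifferentiableAt ℝ (deriv (deriv φ)) x)
    (hMpos : ∀ x ∈ Ioi (0:ℝ), 0 < M x)
    (hM1 : ∀ x ∈ Ioi (0:ℝ), DifferentiableAt ℝ M x)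
    (hM2 : ∀ x ∈ Ioi (0:ℝ), DifferentiableAt ℝ (deriv M) x)
    (hM' : ∀ x ∈ Ioi (0:ℝ), deriv M x < 0)
    (hlogM : ∀ x ∈ Ioi (0:ℝ), 0 ≤ deriv (deriv (fun y => Real.log (M y))) x)
    (hφ' : ∀ x ∈ Ioi (0:ℝ), 0 < deriv φ x)
    (hφint : ∀ x ∈ Ioi (0:ℝ), φ x = ∫ t in (1:ℝ)..x, deriv φ t)
    (hE1 : ∀ x ∈ Ioi (0:ℝ),
      (deriv φ x) ^ 2 * deriv (deriv φ) x
        + φ x * deriv φ x * deriv (deriv (deriv φ)) x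
        - 2 * φ x * (deriv (deriv φ) x) ^ 2 ≤ 0)
    (hh : ∀ x ∈ Ioi (0:ℝ), h x = ∫ t in (1:ℝ)..x, deriv φ t * M t) :
    let g : ℝ → ℝ := fun x => if x = 1 then M 1 else h x / φ x
    (fun x => h x / φ x -
        (M 1 + (1/2) * deriv M 1 * (x - 1)
          + (1/6) * (deriv (deriv M) 1 + deriv (deriv φ) 1 / (2 * deriv φ 1) * deriv M 1)
              * (x - 1) ^ 2))
      =o[𝓝[≠] (1:ℝ)] (fun x => (x - 1) ^ 2) ∧
    (∀ x ∈ Ioi (0:ℝ), DifferentiableAt ℝ g x ∧ DifferentiableAt ℝ (deriv g) x) ∧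
    deriv g 1 = (1/2) * deriv M 1 ∧
    deriv (deriv g) 1 =
      (1/3) * (deriv (deriv M) 1 + deriv (deriv φ) 1 / (2 * deriv φ 1) * deriv M 1) :=
  stmt12_general φ M h hφ1 hφ2 hM1 hM2 hφ' hφint hh
end

section
/- Under the stated hypotheses, the limit as x → 1 of −(A(x)h(x)² − B(x)h(x) + C(x)) / (φ(x)²h(x)²) exists, equals (1/6)·( (M'(1)/M(1))·(φ''(1)/φ'(1)) + (4·M(1)·M''(1) − 3·M'(1)²)/(2·M(1)²) ), and this number is strictly positive; moreover (log(h/φ))'' = −(Ah² − Bh + C)/(φ²h²) on (0,∞). -/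
/-!
Write `u = f / (x - a)` for a function vanishing simply at `a`. Then
`(log |f|)'' + 1 / (x - a)² = (log |u|)'' = (u u'' - u'²) / u²`, and the difference quotients
representing `u, u', u''` tend to `f'(a), f''(a) / 2, f'''(a) / 3`, each by one step of
L'Hôpital's rule; this needs `f'''` only at `a`. Applied to `h` and `φ`, which both vanish
simply at `1`, the singular terms `1 / (x - 1)²` cancel in
`(log h)'' - (log φ)'' = (log (h / φ))''`.
The limit is positive: condition (iii) at `x = 1`, where `φ = 0`, gives `φ''(1) ≤ 0`, and
`4 M M'' - 3 M'² = 4 (M M'' - M'²) + M'² > 0` by log-convexity and `M' < 0`.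
-/

open Real Set Filter Topology

theorem tendsto_div_pow_succ_of_hasDerivAt {N N' : ℝ → ℝ} {a c : ℝ} {n : ℕ}
    (hN : ∀ᶠ x in 𝓝 a, HasDerivAt N (N' x) x) (hNa : N a = 0)
    (hN' : Tendsto (fun x => N' x / (x - a) ^ n) (𝓝[≠] a) (𝓝 c)) :
    Tendsto (fun x => N x / (x - a) ^ (n + 1)) (𝓝[≠] a) (𝓝 (c / (n + 1))) := by
  have hpow (x : ℝ) :
      HasDerivAt (fun y => (y - a) ^ (n + 1)) ((n + 1) * (x - a) ^ n) x := by
    simpa using ((hasDerivAt_id x).sub_const a).fun_pow (n + 1)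
  refine HasDerivAt.lhopital_zero_nhdsNE (eventually_nhdsWithin_of_eventually_nhds hN)
    (.of_forall hpow) ?_ ?_ ?_ ?_
  · filter_upwards [self_mem_nhdsWithin] with x hx
    exact mul_ne_zero (by positivity) (pow_ne_zero _ (sub_ne_zero.2 hx))
  · simpa [hNa] using hN.self_of_nhds.continuousAt.tendsto.mono_left nhdsWithin_le_nhds
  · have : Continuous fun y : ℝ => (y - a) ^ (n + 1) := by fun_prop
    simpa using (this.tendsto a).mono_left nhdsWithin_le_nhds
  · refine (hN'.div_const (n + 1)).congr fun x => ?_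
    rw [div_div, mul_comm]

section QuotientLimits

variable {f f' f'' : ℝ → ℝ} {a : ℝ}

-- With `u = f / (x - a)`, the quotients in the next two lemmas are `u'` and `u''`.
theorem tendsto_deriv_div_sub (hf : ∀ᶠ x in 𝓝 a, HasDerivAt f (f' x) x)
    (hf' : ∀ᶠ x in 𝓝 a, HasDerivAt f' (f'' x) x) (hf'' : ContinuousAt f'' a) (hfa : f a = 0) :
    Tendsto (fun x => ((x - a) * f' x - f x) / (x - a) ^ 2) (𝓝[≠] a) (𝓝 (f'' a / 2)) := by
  convert tendsto_div_pow_succ_of_hasDerivAt (a := a) (n := 1) (c := f'' a)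
    (N := fun x => (x - a) * f' x - f x) (N' := fun x => (x - a) * f'' x) ?_ (by simp [hfa]) ?_
    using 2
  · norm_num
  · filter_upwards [hf, hf'] with x hfx hf'x
    exact ((((hasDerivAt_id' x).sub_const a).fun_mul hf'x).fun_sub hfx).congr_deriv (by ring)
  · refine (hf''.tendsto.mono_left nhdsWithin_le_nhds).congr' ?_
    filter_upwards [eventually_mem_nhdsWithin] with x hx
    field_simp [sub_ne_zero.2 hx]

theorem tendsto_deriv2_div_sub (hf : ∀ᶠ x in 𝓝 a, HasDerivAt f (f' x) x)
    (hf' : ∀ᶠ x in 𝓝 a, HasDerivAt f' (f'' x) x) (hf'' : DifferentiableAt ℝ f'' a)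
    (hfa : f a = 0) :
    Tendsto (fun x => ((x - a) ^ 2 * f'' x - 2 * (x - a) * f' x + 2 * f x) / (x - a) ^ 3)
      (𝓝[≠] a) (𝓝 (deriv f'' a / 3)) := by
  set β := f'' a
  have hne : ∀ᶠ x in 𝓝[≠] a, x - a ≠ 0 :=
    eventually_mem_nhdsWithin.mono fun x hx => sub_ne_zero.2 hx
  have hslope : Tendsto (fun x => (f'' x - β) / (x - a)) (𝓝[≠] a) (𝓝 (deriv f'' a)) := by
    refine (hasDerivAt_iff_tendsto_slope.1 hf''.hasDerivAt).congr fun x => ?_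
    rw [slope_def_field]
  have hrest : Tendsto (fun x => (β * (x - a) ^ 2 - 2 * (x - a) * f' x + 2 * f x) / (x - a) ^ 3)
      (𝓝[≠] a) (𝓝 (-2 * deriv f'' a / 3)) := by
    convert tendsto_div_pow_succ_of_hasDerivAt (a := a) (n := 2) (c := -2 * deriv f'' a)
      (N := fun x => β * (x - a) ^ 2 - 2 * (x - a) * f' x + 2 * f x)
      (N' := fun x => -2 * (x - a) * (f'' x - β)) ?_ (by simp [hfa]) ?_ using 2
    · norm_num
    · filter_upwards [hf, hf'] with x hfx hf'x
      have ht := (hasDerivAt_id' x).sub_const a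
      exact ((((ht.fun_pow 2).const_mul β).fun_sub ((ht.const_mul 2).fun_mul hf'x)).fun_add
        (hfx.const_mul 2)).congr_deriv (by ring)
    · refine (hslope.const_mul (-2)).congr' ?_
      filter_upwards [hne] with x hx
      field_simp
  convert (hslope.add hrest).congr' ?_ using 2
  · ring
  · filter_upwards [hne] with x hx
    field_simp
    ring

theorem tendsto_second_log_deriv_add_inv_sq (hf : ∀ᶠ x in 𝓝 a, HasDerivAt f (f' x) x)
    (hf' : ∀ᶠ x in 𝓝 a, HasDerivAt f' (f'' x) x) (hf'' : DifferentiableAt ℝ f'' a)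
    (hfa : f a = 0) (hf'a : f' a ≠ 0) :
    Tendsto (fun x => (f'' x * f x - f' x ^ 2) / f x ^ 2 + 1 / (x - a) ^ 2) (𝓝[≠] a)
      (𝓝 (deriv f'' a / (3 * f' a) - f'' a ^ 2 / (4 * f' a ^ 2))) := by
  have hu : Tendsto (fun x => f x / (x - a)) (𝓝[≠] a) (𝓝 (f' a)) := by
    simpa using tendsto_div_pow_succ_of_hasDerivAt (n := 0) hf hfa
      (by simpa using hf'.self_of_nhds.continuousAt.tendsto.mono_left nhdsWithin_le_nhds)
  have hf0 : ∀ᶠ x in 𝓝[≠] a, x - a ≠ 0 ∧ f x ≠ 0 := by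
    filter_upwards [eventually_mem_nhdsWithin, hu.eventually_ne hf'a] with x hx hux
    exact ⟨sub_ne_zero.2 hx, fun h => hux (by simp [h])⟩
  have hlim := ((hu.mul (tendsto_deriv2_div_sub hf hf' hf'' hfa)).sub
    ((tendsto_deriv_div_sub hf hf' hf''.continuousAt hfa).pow 2)).div (hu.pow 2)
    (pow_ne_zero 2 hf'a)
  convert hlim.congr' ?_ using 2
  · field_simp
    ring
  · filter_upwards [hf0] with x ⟨hx, hfx⟩
    rw [Pi.div_apply]
    field_simp
    ring

end QuotientLimits

theorem hasDerivAt_of_eq_intervalIntegral {f g : ℝ → ℝ} {s : Set ℝ} {a x : ℝ} (hs : IsOpen s)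
    [s.OrdConnected] (ha : a ∈ s) (hg : ContinuousOn g s)
    (hf : ∀ y ∈ s, f y = ∫ t in a..y, g t) (hx : x ∈ s) : HasDerivAt f (g x) x := by
  have hint : HasDerivAt (fun y => ∫ t in a..y, g t) (g x) x :=
    intervalIntegral.integral_hasDerivAt_right
      ((hg.mono (Set.OrdConnected.uIcc_subset ‹_› ha hx)).intervalIntegrable)
      (hg.stronglyMeasurableAtFilter hs x hx) (hg.continuousAt (hs.mem_nhds hx))
  exact hint.congr_of_eventuallyEq (eventually_of_mem (hs.mem_nhds hx) hf)

theorem ne_zero_of_hasDerivAt_pos {f f' : ℝ → ℝ} {s : Set ℝ} {a x : ℝ} (hs : Convex ℝ s)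
    (hso : IsOpen s) (hf : ∀ y ∈ s, HasDerivAt f (f' y) y) (hf' : ∀ y ∈ s, 0 < f' y)
    (ha : a ∈ s) (hfa : f a = 0) (hx : x ∈ s) (hxa : x ≠ a) : f x ≠ 0 := by
  have hmono : StrictMonoOn f s :=
    strictMonoOn_of_deriv_pos hs (fun y hy => (hf y hy).continuousAt.continuousWithinAt)
      fun y hy => by
        rw [hso.interior_eq] at hy
        exact (hf y hy).deriv ▸ hf' y hy
  exact fun hfx => hxa (hmono.injOn hx ha (hfx.trans hfa.symm))

theorem deriv_deriv_log_div {u v u' v' : ℝ → ℝ} {u'' v'' x : ℝ}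
    (hu : ∀ᶠ y in 𝓝 x, HasDerivAt u (u' y) y) (hv : ∀ᶠ y in 𝓝 x, HasDerivAt v (v' y) y)
    (hu' : HasDerivAt u' u'' x) (hv' : HasDerivAt v' v'' x)
    (hu0 : ∀ᶠ y in 𝓝 x, u y ≠ 0) (hv0 : ∀ᶠ y in 𝓝 x, v y ≠ 0) :
    deriv (deriv fun y => log (u y / v y)) x =
      (u'' * u x - u' x ^ 2) / u x ^ 2 - (v'' * v x - v' x ^ 2) / v x ^ 2 := by
  have hlog : deriv (fun y => log (u y / v y)) =ᶠ[𝓝 x] fun y => u' y / u y - v' y / v y := by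
    filter_upwards [hu, hv, hu0, hv0] with y huy hvy hu0y hv0y
    rw [((huy.fun_div hvy hv0y).log (div_ne_zero hu0y hv0y)).deriv]
    field_simp
  rw [hlog.deriv_eq, ((hu'.fun_div hu.self_of_nhds hu0.self_of_nhds).fun_sub
    (hv'.fun_div hv.self_of_nhds hv0.self_of_nhds)).deriv]
  ring

theorem deriv_deriv_log {u u' : ℝ → ℝ} {u'' x : ℝ} (hu : ∀ᶠ y in 𝓝 x, HasDerivAt u (u' y) y)
    (hu' : HasDerivAt u' u'' x) (hu0 : ∀ᶠ y in 𝓝 x, u y ≠ 0) :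
    deriv (deriv fun y => log (u y)) x = (u'' * u x - u' x ^ 2) / u x ^ 2 := by
  simpa using deriv_deriv_log_div hu (.of_forall fun y => hasDerivAt_const y 1) hu'
    (hasDerivAt_const x 0) hu0 (.of_forall fun _ => one_ne_zero)

theorem sub_second_log_deriv_eq {φ φ' φ'' m h h'' : ℝ} (hφ : φ ≠ 0) (hh : h ≠ 0) :
    (h'' * h - (φ' * m) ^ 2) / h ^ 2 - (φ'' * φ - φ' ^ 2) / φ ^ 2 =
      -((φ'' * φ - φ' ^ 2) * h ^ 2 - h'' * φ ^ 2 * h + φ ^ 2 * φ' ^ 2 * m ^ 2)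
        / (φ ^ 2 * h ^ 2) := by
  field_simp
  ring

theorem tendsto_second_log_deriv_sub {φ M h : ℝ → ℝ} {a : ℝ}
    (hφ : ∀ᶠ x in 𝓝 a, DifferentiableAt ℝ φ x)
    (hφ' : ∀ᶠ x in 𝓝 a, DifferentiableAt ℝ (deriv φ) x)
    (hφ'' : DifferentiableAt ℝ (deriv (deriv φ)) a)
    (hM : ∀ᶠ x in 𝓝 a, DifferentiableAt ℝ M x) (hM' : DifferentiableAt ℝ (deriv M) a)
    (hh : ∀ᶠ x in 𝓝 a, HasDerivAt h (deriv φ x * M x) x)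
    (hφa : φ a = 0) (hha : h a = 0) (hφ'a : deriv φ a ≠ 0) (hMa : M a ≠ 0) :
    Tendsto (fun x =>
        (deriv (fun y => deriv φ y * M y) x * h x - (deriv φ x * M x) ^ 2) / h x ^ 2
          - (deriv (deriv φ) x * φ x - deriv φ x ^ 2) / φ x ^ 2) (𝓝[≠] a)
      (𝓝 ((1 / 6) * (deriv M a / M a * (deriv (deriv φ) a / deriv φ a)
        + (4 * M a * deriv (deriv M) a - 3 * (deriv M a) ^ 2) / (2 * (M a) ^ 2)))) := by
  have hderiv_h' : ∀ᶠ x in 𝓝 a, HasDerivAt (fun y => deriv φ y * M y)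
      (deriv (deriv φ) x * M x + deriv φ x * deriv M x) x := by
    filter_upwards [hφ', hM] with x hφx hMx using hφx.hasDerivAt.fun_mul hMx.hasDerivAt
  have hderiv_h'' : HasDerivAt (deriv fun y => deriv φ y * M y)
      (deriv (deriv (deriv φ)) a * M a + deriv (deriv φ) a * deriv M a
        + (deriv (deriv φ) a * deriv M a + deriv φ a * deriv (deriv M) a)) a := by
    refine ((hφ''.hasDerivAt.fun_mul hM.self_of_nhds.hasDerivAt).fun_add
      (hφ'.self_of_nhds.hasDerivAt.fun_mul hM'.hasDerivAt)).congr_of_eventuallyEq ?_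
    filter_upwards [hderiv_h'] with x hx using hx.deriv
  have hlim_h := tendsto_second_log_deriv_add_inv_sq hh (hderiv_h'.mono fun x hx => hx.deriv ▸ hx)
    hderiv_h''.differentiableAt hha (mul_ne_zero hφ'a hMa)
  have hlim_φ := tendsto_second_log_deriv_add_inv_sq (hφ.mono fun x hx => hx.hasDerivAt)
    (hφ'.mono fun x hx => hx.hasDerivAt) hφ'' hφa hφ'a
  rw [hderiv_h''.deriv, hderiv_h'.self_of_nhds.deriv] at hlim_h
  convert hlim_h.sub hlim_φ using 2
  · ring
  · field_simp
    ring

theorem one_sixth_mul_add_pos {m m' m'' φ' φ'' : ℝ} (hm : 0 < m) (hm' : m' < 0) (hφ' : 0 < φ')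
    (hφ'' : φ'' ≤ 0) (hlog : 0 ≤ (m'' * m - m' ^ 2) / m ^ 2) :
    0 < 1 / 6 * (m' / m * (φ'' / φ') + (4 * m * m'' - 3 * m' ^ 2) / (2 * m ^ 2)) := by
  have hlog' : 0 ≤ m'' * m - m' ^ 2 := by
    simpa [div_nonneg_iff, hm.ne', sq_nonneg, pow_pos hm] using hlog
  have hterm₁ : 0 ≤ m' / m * (φ'' / φ') :=
    mul_nonneg_of_nonpos_of_nonpos (div_nonpos_of_nonpos_of_nonneg hm'.le hm.le)
      (div_nonpos_of_nonpos_of_nonneg hφ'' hφ'.le)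
  have hterm₂ : 0 < (4 * m * m'' - 3 * m' ^ 2) / (2 * m ^ 2) := by
    apply div_pos _ (by positivity)
    linarith [sq_pos_of_neg hm']
  exact mul_pos (by norm_num) (add_pos_of_nonneg_of_pos hterm₁ hterm₂)

/-- Claim in the proof of Theorem 1 (with `q = 1`, `A = φ''φ − φ'²`, `B = (φ'M)'φ²`,
`C = φ²φ'²M²`): the limit as `x → 1` of `−(Ah² − Bh + C)/(φ²h²)` exists, equals the
stated positive number, and `(log (h/φ))'' = −(Ah² − Bh + C)/(φ²h²)` on `(0,∞)`
(away from the point `x = 1`, where both sides agree by continuity). -/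
theorem stmt13
    (φ M h : ℝ → ℝ)
    (hφ1 : ∀ x ∈ Ioi (0:ℝ), DifferentiableAt ℝ φ x)
    (hφ2 : ∀ x ∈ Ioi (0:ℝ), DifferentiableAt ℝ (deriv φ) x)
    (hφ3 : ∀ x ∈ Ioi (0:ℝ), DifferentiableAt ℝ (deriv (deriv φ)) x)
    (hMpos : ∀ x ∈ Ioi (0:ℝ), 0 < M x)
    (hM1 : ∀ x ∈ Ioi (0:ℝ), DifferentiableAt ℝ M x)
    (hM2 : ∀ x ∈ Ioi (0:ℝ), DifferentiableAt ℝ (deriv M) x)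
    (hM' : ∀ x ∈ Ioi (0:ℝ), deriv M x < 0)
    (hlogM : ∀ x ∈ Ioi (0:ℝ), 0 ≤ deriv (deriv (fun y => Real.log (M y))) x)
    (hφ' : ∀ x ∈ Ioi (0:ℝ), 0 < deriv φ x)
    (hφint : ∀ x ∈ Ioi (0:ℝ), φ x = ∫ t in (1:ℝ)..x, deriv φ t)
    (hE1 : ∀ x ∈ Ioi (0:ℝ),
      (deriv φ x) ^ 2 * deriv (deriv φ) x
        + φ x * deriv φ x * deriv (deriv (deriv φ)) x
        - 2 * φ x * (deriv (deriv φ) x) ^ 2 ≤ 0)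
    (hh : ∀ x ∈ Ioi (0:ℝ), h x = ∫ t in (1:ℝ)..x, deriv φ t * M t) :
    let A : ℝ → ℝ := fun x => deriv (deriv φ) x * φ x - (deriv φ x) ^ 2
    let B : ℝ → ℝ := fun x => deriv (fun y => deriv φ y * M y) x * (φ x) ^ 2
    let C : ℝ → ℝ := fun x => (φ x) ^ 2 * (deriv φ x) ^ 2 * (M x) ^ 2
    let g : ℝ → ℝ := fun x => if x = 1 then M 1 else h x / φ x
    let L : ℝ := (1/6) * (deriv M 1 / M 1 * (deriv (deriv φ) 1 / deriv φ 1)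
      + (4 * M 1 * deriv (deriv M) 1 - 3 * (deriv M 1) ^ 2) / (2 * (M 1) ^ 2))
    Tendsto (fun x => -(A x * (h x) ^ 2 - B x * h x + C x) / ((φ x) ^ 2 * (h x) ^ 2))
      (𝓝[≠] (1:ℝ)) (𝓝 L) ∧
    0 < L ∧
    (∀ x ∈ Ioi (0:ℝ), x ≠ 1 →
      deriv (deriv (fun y => Real.log (g y))) x =
        -(A x * (h x) ^ 2 - B x * h x + C x) / ((φ x) ^ 2 * (h x) ^ 2)) := by
  intro A B C g L
  have one_mem : (1 : ℝ) ∈ Ioi 0 := mem_Ioi.2 one_pos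
  have near1 {P : ℝ → Prop} (hP : ∀ x ∈ Ioi (0 : ℝ), P x) : ∀ᶠ x in 𝓝 1, P x :=
    eventually_of_mem (Ioi_mem_nhds one_pos) hP
  have hderiv_h : ∀ x ∈ Ioi (0 : ℝ), HasDerivAt h (deriv φ x * M x) x :=
    fun x => hasDerivAt_of_eq_intervalIntegral isOpen_Ioi one_mem
      (fun t ht => ((hφ2 t ht).continuousAt.mul (hM1 t ht).continuousAt).continuousWithinAt) hh
  have hφ_one : φ 1 = 0 := by rw [hφint 1 one_mem, intervalIntegral.integral_same]
  have hh_one : h 1 = 0 := by rw [hh 1 one_mem, intervalIntegral.integral_same]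
  have hφ_ne : ∀ x ∈ Ioi (0 : ℝ), x ≠ 1 → φ x ≠ 0 := fun x =>
    ne_zero_of_hasDerivAt_pos (convex_Ioi 0) isOpen_Ioi (fun y hy => (hφ1 y hy).hasDerivAt) hφ'
      one_mem hφ_one
  have hh_ne : ∀ x ∈ Ioi (0 : ℝ), x ≠ 1 → h x ≠ 0 := fun x =>
    ne_zero_of_hasDerivAt_pos (convex_Ioi 0) isOpen_Ioi hderiv_h
      (fun y hy => mul_pos (hφ' y hy) (hMpos y hy)) one_mem hh_one
  refine ⟨?_, ?_, ?_⟩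
  · refine (tendsto_second_log_deriv_sub (near1 hφ1) (near1 hφ2) (hφ3 1 one_mem) (near1 hM1)
      (hM2 1 one_mem) (near1 hderiv_h) hφ_one hh_one (hφ' 1 one_mem).ne'
      (hMpos 1 one_mem).ne').congr' ?_
    filter_upwards [eventually_mem_nhdsWithin, nhdsWithin_le_nhds (Ioi_mem_nhds one_pos)]
      with x hx1 hx
    exact sub_second_log_deriv_eq (hφ_ne x hx hx1) (hh_ne x hx hx1)
  · have hφ''_one : deriv (deriv φ) 1 ≤ 0 := by
      have := hE1 1 one_mem
      rw [hφ_one] at this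
      nlinarith [pow_pos (hφ' 1 one_mem) 2]
    refine one_sixth_mul_add_pos (hMpos 1 one_mem) (hM' 1 one_mem) (hφ' 1 one_mem) hφ''_one ?_
    rw [← deriv_deriv_log (near1 fun x hx => (hM1 x hx).hasDerivAt) (hM2 1 one_mem).hasDerivAt
      (near1 fun x hx => (hMpos x hx).ne')]
    exact hlogM 1 one_mem
  · intro x hx hx1
    have hU : Ioi 0 ∩ {1}ᶜ ∈ 𝓝 x :=
      (isOpen_Ioi.inter isOpen_compl_singleton).mem_nhds ⟨hx, hx1⟩
    have hg : (fun y => log (g y)) =ᶠ[𝓝 x] fun y => log (h y / φ y) :=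
      eventually_of_mem hU fun y hy => by simp only [g, if_neg (show y ≠ 1 from hy.2)]
    rw [hg.deriv.deriv_eq,
      deriv_deriv_log_div (eventually_of_mem hU fun y hy => hderiv_h y hy.1)
      (eventually_of_mem hU fun y hy => (hφ1 y hy.1).hasDerivAt)
      ((hφ2 x hx).mul (hM1 x hx)).hasDerivAt (hφ2 x hx).hasDerivAt
      (eventually_of_mem hU fun y hy => hh_ne y hy.1 hy.2)
      (eventually_of_mem hU fun y hy => hφ_ne y hy.1 hy.2)]
    exact sub_second_log_deriv_eq (hφ_ne x hx hx1) (hh_ne x hx hx1)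
end

section
/- Let φ(y) = −∫_y^∞ e^{t − e^t} dt, M(y) = e^{y²}, and h(y) = −∫_y^∞ φ'(t)M(t) dt for y ∈ (0,∞). Then (h/φ)' > 0 and (log(h/φ))'' > 0 everywhere on (0,∞). -/
/-!
With `f(t) = e^{t - e^t + t²}` and `g(y) = ∫_y^∞ f`, the identity `∫_y^∞ e^{t - e^t} dt = e^{-e^y}`
gives `h/φ = g · e^{e^y}`. The two claims then read `f < e^y g` and `(log g)'' + e^y > 0`, i.e.
`a f g + f² < e^y g²` where `a = f'/f = 1 + 2y - e^y`. Both follow from `f < r g`, where `r` is the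
positive root of `r² + a r = e^y`, since `c X² - a f X - f²` is positive beyond its root `f / r`
and `r ≤ e^y` for `y ≥ 0`. Finally `f < r g` holds because `D = g - f/r` tends to `0` at infinity
while `D' = -f (r² + a r - r') / r² < 0`, the root satisfying `r' < e^y`.
-/

open Real Set Filter Topology MeasureTheory Asymptotics

theorem hasDerivAt_integral_Ioi {f : ℝ → ℝ} (hf : Continuous f)
    (hi : ∀ a, IntegrableOn f (Ioi a)) (y : ℝ) :
    HasDerivAt (fun x => ∫ t in Ioi x, f t) (-f y) y := by
  have hsplit : ∀ x, ∫ t in Ioi x, f t = (∫ t in Ioi 0, f t) - ∫ t in (0:ℝ)..x, f t := fun x => by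
    rw [← intervalIntegral.integral_Ioi_sub_Ioi' (hi 0) (hi x), sub_sub_cancel]
  rw [funext hsplit]
  exact (hf.integral_hasStrictDerivAt 0 y).hasDerivAt.const_sub _

theorem integral_Ioi_exp_sub_exp (y : ℝ) :
    ∫ t in Ioi y, exp (t - exp t) = exp (-exp y) := by
  have hderiv : ∀ x ∈ Ici y, HasDerivAt (fun t => -exp (-exp t)) (exp (x - exp x)) x :=
    fun x _ => ((hasDerivAt_exp x).neg.exp.neg).congr_deriv (by
      simp only [Pi.neg_apply, exp_sub, exp_neg]
      field_simp)
  have htend : Tendsto (fun t => -exp (-exp t)) atTop (𝓝 0) := by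
    simpa using (tendsto_exp_neg_atTop_nhds_zero.comp tendsto_exp_atTop).neg
  have hint : IntegrableOn (fun t => exp (t - exp t)) (Ioi y) :=
    integrableOn_Ioi_deriv_of_nonneg' hderiv (fun x _ => (exp_pos _).le) htend
  rw [integral_Ioi_of_hasDerivAt_of_tendsto' hderiv hint htend]
  ring

theorem div_lt_of_riccati_subsolution {f g a r r' : ℝ → ℝ}
    (hg : ∀ y, HasDerivAt g (-f y) y) (hf : ∀ y, HasDerivAt f (a y * f y) y)
    (hr : ∀ y, HasDerivAt r (r' y) y) (hf0 : ∀ y, 0 < f y) (hr0 : ∀ y, 0 < r y)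
    (hsub : ∀ y, r' y < r y ^ 2 + a y * r y)
    (hlim : Tendsto (fun y => g y - f y / r y) atTop (𝓝 0)) (y : ℝ) : f y / r y < g y := by
  have hD : ∀ y, HasDerivAt (fun x => g x - f x / r x)
      (-(f y * (r y ^ 2 + a y * r y - r' y)) / r y ^ 2) y := fun y => by
    refine ((hg y).sub ((hf y).div (hr y) (hr0 y).ne')).congr_deriv ?_
    have := (hr0 y).ne'
    field_simp
    ring
  have hD' : ∀ y, -(f y * (r y ^ 2 + a y * r y - r' y)) / r y ^ 2 < 0 := fun y => by
    have := hr0 y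
    have := mul_pos (hf0 y) (sub_pos.2 (hsub y))
    exact div_neg_of_neg_of_pos (by linarith) (by positivity)
  have hanti := strictAnti_of_hasDerivAt_neg hD hD'
  have := (hanti.antitone.le_of_tendsto hlim (y + 1)).trans_lt (hanti (lt_add_one y))
  simpa [sub_pos] using this

noncomputable def posRoot (a c : ℝ) : ℝ := (-a + √(a ^ 2 + 4 * c)) / 2

section posRoot

variable {a c : ℝ}

theorem abs_lt_sqrt_sq_add (hc : 0 < c) : |a| < √(a ^ 2 + 4 * c) := by
  rw [← sqrt_sq_eq_abs]
  exact sqrt_lt_sqrt (sq_nonneg a) (by linarith)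

theorem posRoot_pos (hc : 0 < c) : 0 < posRoot a c := by
  have := (abs_lt.1 (abs_lt_sqrt_sq_add (a := a) hc)).2
  unfold posRoot; linarith

theorem posRoot_add_pos (hc : 0 < c) : 0 < posRoot a c + a := by
  have := (abs_lt.1 (abs_lt_sqrt_sq_add (a := a) hc)).1
  unfold posRoot; linarith

theorem posRoot_sq_add_mul (hc : 0 ≤ c) : posRoot a c ^ 2 + a * posRoot a c = c := by
  have := sq_sqrt (show 0 ≤ a ^ 2 + 4 * c by positivity)
  unfold posRoot; linear_combination this / 4

theorem one_le_posRoot (hc : 0 < c) (h : 1 + a ≤ c) : 1 ≤ posRoot a c := by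
  have := posRoot_sq_add_mul (a := a) hc.le
  nlinarith [posRoot_add_pos (a := a) hc]

theorem posRoot_le_self (hc : 0 < c) (h : 1 - a ≤ c) : posRoot a c ≤ c := by
  have := posRoot_sq_add_mul (a := a) hc.le
  nlinarith [posRoot_add_pos (a := a) hc, posRoot_pos (a := a) hc]

theorem mul_add_sq_lt_of_div_posRoot_lt {f g : ℝ} (hc : 0 < c) (hf : 0 ≤ f)
    (h : f / posRoot a c < g) : a * f * g + f ^ 2 < c * g ^ 2 := by
  set r := posRoot a c
  have hr : 0 < r := posRoot_pos hc
  have hra : 0 < r + a := posRoot_add_pos hc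
  have hrg : f < r * g := by rwa [div_lt_iff₀ hr, mul_comm] at h
  have hg : 0 < g := (div_nonneg hf hr.le).trans_lt h
  have hfac : c * g ^ 2 - (a * f * g + f ^ 2) = (r * g - f) * ((r + a) * g + f) := by
    linear_combination (-g ^ 2) * posRoot_sq_add_mul (a := a) hc.le
  have := mul_pos (sub_pos.2 hrg) (by positivity : 0 < (r + a) * g + f)
  linarith

end posRoot

theorem HasDerivAt.posRoot {a c : ℝ → ℝ} {a' c' x : ℝ} (ha : HasDerivAt a a' x)
    (hc : HasDerivAt c c' x) (hc0 : 0 < c x) :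
    HasDerivAt (fun x => _root_.posRoot (a x) (c x))
      ((c' - a' * _root_.posRoot (a x) (c x)) / (2 * _root_.posRoot (a x) (c x) + a x)) x := by
  have hin : HasDerivAt (fun x => a x ^ 2 + 4 * c x) (2 * a x * a' + 4 * c') x :=
    ((ha.pow 2).add (hc.const_mul 4)).congr_deriv (by norm_num)
  have hs := hin.sqrt (by positivity)
  refine ((ha.neg.add hs).div_const 2).congr_deriv ?_
  have hsq : √(a x ^ 2 + 4 * c x) = 2 * _root_.posRoot (a x) (c x) + a x := by
    unfold _root_.posRoot; ring
  have hs0 : 2 * _root_.posRoot (a x) (c x) + a x ≠ 0 := by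
    rw [← hsq]; positivity
  rw [hsq]
  field_simp
  ring

namespace TiltedGumbel

-- In the notation of the statement, `density = φ' · M` and `tail = -h`.
noncomputable def density (t : ℝ) : ℝ := exp (t - exp t) * exp (t ^ 2)

noncomputable def tail (y : ℝ) : ℝ := ∫ t in Ioi y, density t

noncomputable def logSlope (y : ℝ) : ℝ := 1 + 2 * y - exp y

theorem density_pos (t : ℝ) : 0 < density t := by unfold density; positivity

theorem continuous_density : Continuous density := by unfold density; fun_prop

theorem hasDerivAt_density (y : ℝ) : HasDerivAt density (logSlope y * density y) y := by
  have h := ((hasDerivAt_id y).sub (hasDerivAt_exp y)).exp.mul (hasDerivAt_pow 2 y).exp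
  refine h.congr_deriv ?_
  simp only [density, logSlope, Pi.sub_apply, id]
  ring

theorem density_le_exp_neg {t : ℝ} (ht : 6 ≤ t) : density t ≤ exp (-t) := by
  have h4 := pow_div_factorial_le_exp t (by linarith) 4
  norm_num [Nat.factorial] at h4
  rw [density, ← exp_add, exp_le_exp]
  nlinarith [mul_nonneg (mul_nonneg (by linarith : (0:ℝ) ≤ t - 6) (by linarith : (0:ℝ) ≤ t))
    (by linarith : (0:ℝ) ≤ t)]

theorem density_eventually_le_exp_neg : ∀ᶠ t in atTop, density t ≤ exp (-t) := by
  filter_upwards [eventually_ge_atTop 6] with t ht using density_le_exp_neg ht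

theorem integrableOn_density (a : ℝ) : IntegrableOn density (Ioi a) := by
  refine integrable_of_isBigO_exp_neg one_pos continuous_density.continuousOn
    (IsBigO.of_bound' ?_)
  filter_upwards [density_eventually_le_exp_neg] with t ht
  simpa [abs_of_pos (density_pos t)] using ht

theorem tendsto_density_atTop : Tendsto density atTop (𝓝 0) :=
  squeeze_zero' (Eventually.of_forall fun t => (density_pos t).le) density_eventually_le_exp_neg
    tendsto_exp_neg_atTop_nhds_zero

theorem tail_pos (y : ℝ) : 0 < tail y := by
  rw [tail, setIntegral_pos_iff_support_of_nonneg_ae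
    (Eventually.of_forall fun t => (density_pos t).le) (integrableOn_density y)]
  have hsupp : Function.support density = univ :=
    Function.support_eq_univ fun t => (density_pos t).ne'
  simp [hsupp]

theorem hasDerivAt_tail (y : ℝ) : HasDerivAt tail (-density y) y :=
  hasDerivAt_integral_Ioi continuous_density integrableOn_density y

theorem tendsto_tail_atTop : Tendsto tail atTop (𝓝 0) :=
  tendsto_integral_Ioi_zero tendsto_id

noncomputable def riccatiRoot (y : ℝ) : ℝ := posRoot (logSlope y) (exp y)

theorem riccatiRoot_pos (y : ℝ) : 0 < riccatiRoot y := posRoot_pos (exp_pos y)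

theorem one_le_riccatiRoot (y : ℝ) : 1 ≤ riccatiRoot y :=
  one_le_posRoot (exp_pos y) (by unfold logSlope; linarith [add_one_le_exp y])

theorem riccatiRoot_le_exp {y : ℝ} (hy : 0 ≤ y) : riccatiRoot y ≤ exp y :=
  posRoot_le_self (exp_pos y) (by unfold logSlope; linarith)

theorem hasDerivAt_logSlope (y : ℝ) : HasDerivAt logSlope (2 - exp y) y :=
  (((hasDerivAt_id y).const_mul 2).const_add 1 |>.sub (hasDerivAt_exp y)).congr_deriv (by simp)

theorem hasDerivAt_riccatiRoot (y : ℝ) :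
    HasDerivAt riccatiRoot
      ((exp y - (2 - exp y) * riccatiRoot y) / (2 * riccatiRoot y + logSlope y)) y :=
  (hasDerivAt_logSlope y).posRoot (hasDerivAt_exp y) (exp_pos y)

theorem riccatiRoot_deriv_lt (y : ℝ) :
    (exp y - (2 - exp y) * riccatiRoot y) / (2 * riccatiRoot y + logSlope y) <
      riccatiRoot y ^ 2 + logSlope y * riccatiRoot y := by
  set r := riccatiRoot y
  have hroot : r ^ 2 + logSlope y * r = exp y := posRoot_sq_add_mul (exp_pos y).le
  have hr : 0 < r := riccatiRoot_pos y
  have hra : 0 < r + logSlope y := posRoot_add_pos (exp_pos y)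
  rw [hroot, div_lt_iff₀ (by linarith)]
  have hmul : r * (exp y * (r + logSlope y) - exp y + 2 * r) =
      2 * (r - exp y / 4) ^ 2 + 7 / 8 * exp y ^ 2 := by
    linear_combination exp y * hroot
  have : 0 < exp y * (r + logSlope y) - exp y + 2 * r :=
    pos_of_mul_pos_right (hmul ▸ by positivity) hr.le
  linarith

theorem tendsto_tail_sub_density_div_riccatiRoot :
    Tendsto (fun y => tail y - density y / riccatiRoot y) atTop (𝓝 0) := by
  have hlow : Tendsto (fun y => tail y - density y) atTop (𝓝 0) := by
    simpa using tendsto_tail_atTop.sub tendsto_density_atTop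
  refine tendsto_of_tendsto_of_tendsto_of_le_of_le hlow tendsto_tail_atTop
    (fun y => ?_) (fun y => ?_)
  · exact sub_le_sub_left (div_le_self (density_pos y).le (one_le_riccatiRoot y)) _
  · exact sub_le_self _ (div_pos (density_pos y) (riccatiRoot_pos y)).le

theorem density_div_riccatiRoot_lt_tail (y : ℝ) : density y / riccatiRoot y < tail y :=
  div_lt_of_riccati_subsolution hasDerivAt_tail hasDerivAt_density hasDerivAt_riccatiRoot
    density_pos riccatiRoot_pos riccatiRoot_deriv_lt tendsto_tail_sub_density_div_riccatiRoot y

theorem density_lt_exp_mul_tail {y : ℝ} (hy : 0 ≤ y) : density y < exp y * tail y := by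
  have h := density_div_riccatiRoot_lt_tail y
  rw [div_lt_iff₀ (riccatiRoot_pos y)] at h
  nlinarith [riccatiRoot_le_exp hy, tail_pos y]

theorem logSlope_mul_add_sq_lt (y : ℝ) :
    logSlope y * density y * tail y + density y ^ 2 < exp y * tail y ^ 2 :=
  mul_add_sq_lt_of_div_posRoot_lt (exp_pos y) (density_pos y).le (density_div_riccatiRoot_lt_tail y)

theorem neg_integral_div_neg_integral (x : ℝ) :
    (-∫ t in Ioi x, exp (t - exp t) * exp (t ^ 2)) / (-∫ t in Ioi x, exp (t - exp t)) =
      tail x * exp (exp x) := by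
  rw [integral_Ioi_exp_sub_exp, neg_div_neg_eq, exp_neg, div_inv_eq_mul]
  rfl

theorem deriv_tail_mul_exp_exp_pos {y : ℝ} (hy : 0 ≤ y) :
    0 < deriv (fun x => tail x * exp (exp x)) y := by
  have hd : HasDerivAt (fun x => tail x * exp (exp x))
      (-density y * exp (exp y) + tail y * (exp (exp y) * exp y)) y :=
    (hasDerivAt_tail y).mul (hasDerivAt_exp y).exp
  rw [hd.deriv]
  have := mul_pos (exp_pos (exp y)) (sub_pos.2 (density_lt_exp_mul_tail hy))
  linarith

theorem deriv_log_tail_mul_exp_exp :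
    deriv (fun x => log (tail x * exp (exp x))) = fun x => exp x - density x / tail x := by
  funext x
  have hlog : (fun x => log (tail x * exp (exp x))) = fun x => log (tail x) + exp x :=
    funext fun x => by rw [log_mul (tail_pos x).ne' (exp_pos _).ne', log_exp]
  rw [hlog]
  exact ((hasDerivAt_tail x).log (tail_pos x).ne' |>.add (hasDerivAt_exp x)).deriv.trans
    (by ring)

theorem deriv_deriv_log_tail_mul_exp_exp_pos (y : ℝ) :
    0 < deriv (deriv fun x => log (tail x * exp (exp x))) y := by
  have hg := tail_pos y
  have hd : HasDerivAt (fun x => exp x - density x / tail x)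
      (exp y - (logSlope y * density y * tail y - density y * -density y) / tail y ^ 2) y :=
    (hasDerivAt_exp y).sub ((hasDerivAt_density y).div (hasDerivAt_tail y) hg.ne')
  rw [deriv_log_tail_mul_exp_exp, hd.deriv]
  have : (logSlope y * density y * tail y - density y * -density y) / tail y ^ 2 < exp y := by
    rw [div_lt_iff₀ (by positivity)]
    linarith [logSlope_mul_add_sq_lt y]
  linarith

end TiltedGumbel

/-- Final auxiliary example of the paper: with `φ(y) = −∫ʸ^∞ e^{t−eᵗ} dt`,
`M(y) = e^{y²}` and `h(y) = −∫ʸ^∞ φ'(t)M(t) dt = −∫ʸ^∞ e^{t−eᵗ}e^{t²} dt`,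
one has `(h/φ)' > 0` and `(log (h/φ))'' > 0` on `(0,∞)`. -/
theorem stmt19 :
    let φ : ℝ → ℝ := fun y => -∫ t in Ioi y, Real.exp (t - Real.exp t)
    let M : ℝ → ℝ := fun y => Real.exp (y ^ 2)
    let h : ℝ → ℝ := fun y => -∫ t in Ioi y, Real.exp (t - Real.exp t) * M t
    ∀ y ∈ Ioi (0:ℝ),
      0 < deriv (fun x => h x / φ x) y ∧
      0 < deriv (deriv (fun x => Real.log (h x / φ x))) y := by
  intro φ M h y hy
  have hq : ∀ x, h x / φ x = TiltedGumbel.tail x * exp (exp x) :=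
    TiltedGumbel.neg_integral_div_neg_integral
  simp only [hq]
  exact ⟨TiltedGumbel.deriv_tail_mul_exp_exp_pos (le_of_lt hy),
    TiltedGumbel.deriv_deriv_log_tail_mul_exp_exp_pos y⟩
end
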